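/- arXiv:0809.2723 — 9 statements merged into one kernel-verified Lean document; each statement's English description precedes it below -/
import Mathlib

section
/- Let X be a real or complex Banach space and let A be a convex bounded subset of X. A countable family {V_n : n ∈ ℕ} of subsets of A is determining for A if and only if every slice of A contains one of the sets V_n. -/
open Bornology Metric

/-- The slice of a set `A` determined by the functional `f` and `ε`:
`S(A,f,ε) = {x ∈ A | Re f(x) > sup_{a ∈ A} Re f(a) - ε}`. -/
def Slice (𝕜 : Type*) [RCLike 𝕜] {X : Type*} [SeminormedAddCommGroup X] [NormedSpace 𝕜 X]
    (A : Set X) (f : X →L[𝕜] 𝕜) (ε : ℝ) : Set X :=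
  {x ∈ A | sSup ((fun a => RCLike.re (f a)) '' A) - ε < RCLike.re (f x)}

/-- `S` is a slice of `A`. -/
def IsSlice (𝕜 : Type*) [RCLike 𝕜] {X : Type*} [SeminormedAddCommGroup X] [NormedSpace 𝕜 X]
    (A S : Set X) : Prop :=
  ∃ (f : X →L[𝕜] 𝕜) (ε : ℝ), 0 < ε ∧ S = Slice 𝕜 A f ε

/-- A countable family `V` of subsets of `A` is determining for `A`:
`A` is contained in the closed convex hull of any `B ⊆ A` meeting every `V n`. -/
def Determining {X : Type*} [SeminormedAddCommGroup X] [NormedSpace ℝ X]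
    (A : Set X) (V : ℕ → Set X) : Prop :=
  ∀ B ⊆ A, (∀ n, (B ∩ V n).Nonempty) → A ⊆ closure (convexHull ℝ B)

/-- `A` is a slicely countably determined set: there is a determining sequence of
slices of `A`. -/
def IsSCD (𝕜 : Type*) [RCLike 𝕜] {X : Type*} [SeminormedAddCommGroup X] [NormedSpace ℝ X]
    [NormedSpace 𝕜 X] (A : Set X) : Prop :=
  ∃ S : ℕ → Set X, (∀ n, IsSlice 𝕜 A (S n)) ∧ Determining A S

lemma bddAbove_re_image {𝕜 : Type*} [RCLike 𝕜] {X : Type*} [NormedAddCommGroup X]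
    [NormedSpace 𝕜 X] {A : Set X} (hbdd : IsBounded A) (f : X →L[𝕜] 𝕜) :
    BddAbove ((fun a => RCLike.re (f a)) '' A) := by
  obtain ⟨C, hC⟩ := hbdd.exists_norm_le
  refine ⟨‖f‖ * C, ?_⟩
  rintro y ⟨x, hx, rfl⟩
  calc RCLike.re (f x) ≤ ‖f x‖ := RCLike.re_le_norm _
    _ ≤ ‖f‖ * ‖x‖ := f.le_opNorm x
    _ ≤ ‖f‖ * C := by
        exact mul_le_mul_of_nonneg_left (hC x hx) (norm_nonneg f)

/-- For a convex bounded subset `A` of a real or complex Banach space `X`,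
a countable family `{V n}` of subsets of `A` is determining for `A` if and only if
every slice of `A` contains one of the `V n`. -/
theorem statement0 {𝕜 : Type*} [RCLike 𝕜] {X : Type*} [NormedAddCommGroup X]
    [NormedSpace ℝ X] [NormedSpace 𝕜 X] [IsScalarTower ℝ 𝕜 X] [CompleteSpace X]
    (A : Set X) (hconv : Convex ℝ A) (hbdd : IsBounded A)
    (V : ℕ → Set X) (hV : ∀ n, V n ⊆ A) :
    Determining A V ↔ ∀ (f : X →L[𝕜] 𝕜) (ε : ℝ), 0 < ε → ∃ n, V n ⊆ Slice 𝕜 A f ε := by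
  rcases A.eq_empty_or_nonempty with rfl | ⟨a₀, ha₀⟩
  · constructor
    · intro _ f ε _
      refine ⟨0, ?_⟩
      rw [Set.subset_empty_iff.mp (hV 0)]
      exact Set.empty_subset _
    · intro _ B _ _
      exact Set.empty_subset _
  constructor
  · -- determining → every slice contains some V n
    intro hdet f ε hε
    by_contra h
    push_neg at h
    -- for each n choose b n ∈ V n not in the slice
    choose b hbV hbS using fun n => Set.not_subset.mp (h n)
    set g : X →L[ℝ] ℝ := (RCLike.reCLM (K := 𝕜)).comp (f.restrictScalars ℝ) with hg
    have hgf : ∀ x, g x = RCLike.re (f x) := fun x => rfl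
    set M : ℝ := sSup ((fun a => RCLike.re (f a)) '' A) with hM
    have hb_le : ∀ n, g (b n) ≤ M - ε := by
      intro n
      have hbA : b n ∈ A := hV n (hbV n)
      have := hbS n
      simp only [Slice, Set.mem_setOf_eq, not_and, not_lt] at this
      exact (this hbA)
    set B : Set X := Set.range b with hB
    have hBA : B ⊆ A := by
      rintro x ⟨n, rfl⟩; exact hV n (hbV n)
    have hmeet : ∀ n, (B ∩ V n).Nonempty := fun n => ⟨b n, ⟨n, rfl⟩, hbV n⟩
    have hAcl : A ⊆ closure (convexHull ℝ B) := hdet B hBA hmeet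
    -- on the closed convex hull, g ≤ M - ε
    have hset : closure (convexHull ℝ B) ⊆ {x | g x ≤ M - ε} := by
      apply closure_minimal
      · apply convexHull_min
        · rintro x ⟨n, rfl⟩; exact hb_le n
        · exact convex_halfSpace_le (⟨g.map_add, fun c x => g.map_smul c x⟩) _
      · exact IsClosed.preimage g.continuous isClosed_Iic
    have hAle : ∀ x ∈ A, RCLike.re (f x) ≤ M - ε := fun x hx => hset (hAcl hx)
    -- but sSup must be approximated within ε
    have hne : ((fun a => RCLike.re (f a)) '' A).Nonempty := ⟨_, a₀, ha₀, rfl⟩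
    obtain ⟨y, ⟨x, hx, rfl⟩, hy⟩ := exists_lt_of_lt_csSup hne (show M - ε < M by linarith)
    exact absurd (hAle x hx) (not_le.mpr hy)
  · -- every slice contains some V n → determining
    intro hsl B hBA hmeet x hxA
    by_contra hx
    set C : Set X := closure (convexHull ℝ B) with hC
    have hCconv : Convex ℝ C := (convex_convexHull ℝ B).closure
    obtain ⟨g, u, hgu, hux⟩ := geometric_hahn_banach_closed_point hCconv isClosed_closure hx
    set f : X →L[𝕜] 𝕜 := g.extendTo𝕜'
    have hre : ∀ y, RCLike.re (f y) = g y := fun y => g.toLinearMap.extendTo𝕜'_apply_re y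
    set M : ℝ := sSup ((fun a => RCLike.re (f a)) '' A) with hM
    have hMx : g x ≤ M := by
      have := le_csSup (bddAbove_re_image hbdd f) ⟨x, hxA, rfl⟩
      simp only [hre] at this
      have hMeq : M = sSup ((fun a => g a) '' A) := by simp only [hM, hre]
      rw [hMeq]
      exact this
    set ε : ℝ := g x - u with hε
    have hεpos : 0 < ε := by simp only [hε]; linarith
    obtain ⟨n, hn⟩ := hsl f ε hεpos
    obtain ⟨y, hyB, hyV⟩ := hmeet n
    have hyS : y ∈ Slice 𝕜 A f ε := hn hyV
    have hyC : y ∈ C := subset_closure (subset_convexHull ℝ B hyB)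
    have h1 : g y < u := hgu y hyC
    have h2 : M - ε < RCLike.re (f y) := hyS.2
    rw [hre] at h2
    have : M - ε ≥ u := by simp only [hε]; linarith
    linarith
end

section
/- Let X be a real or complex Banach space and let A be a closed convex bounded subset of X. If A is separable and A equals the closed convex hull of its denting points, then A is an SCD set. -/
open Bornology Metric

/-- `x` is a denting point of `A`: for every `ε > 0` there is a slice of `A`
containing `x` of diameter less than `ε`. -/
def IsDentingPoint (𝕜 : Type*) [RCLike 𝕜] {X : Type*} [SeminormedAddCommGroup X]
    [NormedSpace 𝕜 X] (A : Set X) (x : X) : Prop :=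
  x ∈ A ∧ ∀ ε : ℝ, 0 < ε → ∃ (f : X →L[𝕜] 𝕜) (δ : ℝ), 0 < δ ∧
    x ∈ Slice 𝕜 A f δ ∧ Metric.diam (Slice 𝕜 A f δ) < ε

/-- A separable set contains a countable dense sequence (if nonempty). -/
lemma exists_dense_seq_of_isSeparable {X : Type*} [NormedAddCommGroup X] (D : Set X)
    (hD : TopologicalSpace.IsSeparable D) (hne : D.Nonempty) :
    ∃ u : ℕ → X, (∀ n, u n ∈ D) ∧ D ⊆ closure (Set.range u) := by
  have : TopologicalSpace.SeparableSpace D := hD.separableSpace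
  have : Nonempty D := hne.to_subtype
  obtain ⟨u, hu⟩ := TopologicalSpace.exists_dense_seq D
  refine ⟨fun n => (u n : X), fun n => (u n).2, ?_⟩
  intro d hd
  have hmem : (⟨d, hd⟩ : D) ∈ closure (Set.range u) := by rw [hu.closure_range]; trivial
  have h2 := (map_mem_closure continuous_subtype_val hmem
    (fun x hx => Set.mem_image_of_mem _ hx) :
    (d : X) ∈ closure (Subtype.val '' (Set.range u)))
  simpa [← Set.range_comp, Function.comp_def] using h2

/-- If a closed convex bounded subset `A` of a Banach space is separable
and equals the closed convex hull of its denting points, then `A` is an SCD set. -/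
theorem statement1 {𝕜 : Type*} [RCLike 𝕜] {X : Type*} [NormedAddCommGroup X]
    [NormedSpace ℝ X] [NormedSpace 𝕜 X] [IsScalarTower ℝ 𝕜 X] [CompleteSpace X]
    (A : Set X) (hclosed : IsClosed A) (hconv : Convex ℝ A) (hbdd : IsBounded A)
    (hsep : TopologicalSpace.IsSeparable A)
    (hdent : A = closure (convexHull ℝ {x | IsDentingPoint 𝕜 A x})) :
    IsSCD 𝕜 A := by
  set D := {x | IsDentingPoint 𝕜 A x} with hDdef
  by_cases hne : D.Nonempty
  · obtain ⟨u, huD, hDc⟩ := exists_dense_seq_of_isSeparable D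
      (hsep.mono (fun x hx => hx.1)) hne
    have hch : ∀ n k : ℕ, ∃ f : X →L[𝕜] 𝕜, ∃ δ : ℝ, 0 < δ ∧ u n ∈ Slice 𝕜 A f δ ∧
        diam (Slice 𝕜 A f δ) < 1/((k:ℝ)+1) := fun n k =>
      (huD n).2 (1/((k:ℝ)+1)) (by positivity)
    choose f δ hδ hmem hdiam using hch
    refine ⟨fun m => Slice 𝕜 A (f m.unpair.1 m.unpair.2) (δ m.unpair.1 m.unpair.2),
      fun m => ⟨_, _, hδ _ _, rfl⟩, ?_⟩
    intro B hBA hB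
    have hDB : D ⊆ closure B := by
      intro d hd
      rw [Metric.mem_closure_iff]
      intro ε hε
      obtain ⟨y, ⟨n, rfl⟩, hy⟩ := Metric.mem_closure_iff.1 (hDc hd) (ε/2) (by positivity)
      obtain ⟨k, hk⟩ := exists_nat_one_div_lt (show (0:ℝ) < ε/2 by positivity)
      obtain ⟨b, hbB, hbS⟩ := hB (Nat.pair n k)
      simp only [Nat.unpair_pair] at hbS
      have hbd : IsBounded (Slice 𝕜 A (f n k) (δ n k)) :=
        hbdd.subset (fun x hx => hx.1)
      have hub : dist (u n) b ≤ diam (Slice 𝕜 A (f n k) (δ n k)) :=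
        dist_le_diam_of_mem hbd (hmem n k) hbS
      refine ⟨b, hbB, ?_⟩
      calc dist d b ≤ dist d (u n) + dist (u n) b := dist_triangle _ _ _
        _ < ε/2 + ε/2 := by
            have := (hub.trans_lt (hdiam n k)).trans hk
            push_cast at this ⊢
            linarith
        _ = ε := by ring
    have hsub : convexHull ℝ D ⊆ closure (convexHull ℝ B) :=
      convexHull_min (hDB.trans (closure_mono (subset_convexHull ℝ B)))
        (convex_convexHull ℝ B).closure
    calc A = closure (convexHull ℝ D) := hdent
      _ ⊆ closure (closure (convexHull ℝ B)) := closure_mono hsub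
      _ = closure (convexHull ℝ B) := closure_closure
  · have hAe : A = ∅ := by
      rw [Set.not_nonempty_iff_eq_empty] at hne
      rw [hdent, hne]; simp
    refine ⟨fun _ => Slice 𝕜 A 0 1, fun n => ⟨0, 1, one_pos, rfl⟩, ?_⟩
    intro B hBA hB
    obtain ⟨b, hb, _⟩ := hB 0
    exact absurd (hBA hb) (by simp [hAe])
end

section
/- Let X be a real or complex Banach space and let A be a separable closed convex bounded subset of X. If there is a countable subset D of X* that is dense in X* with respect to the seminorm ρ_A, where ρ_A(x*) = sup{|x*(a)| : a ∈ A}, then A is an SCD set. -/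
open Bornology Metric

lemma bddAbove_aux {𝕜 : Type*} [RCLike 𝕜] {X : Type*} [NormedAddCommGroup X]
    [NormedSpace 𝕜 X] {A : Set X} (hbdd : Bornology.IsBounded A) (F : X →L[𝕜] 𝕜)
    (φ : 𝕜 → ℝ) (hφ : ∀ z, φ z ≤ ‖z‖) :
    BddAbove ((fun a => φ (F a)) '' A) := by
  obtain ⟨M, hM⟩ := hbdd.exists_norm_le
  refine ⟨‖F‖ * M, ?_⟩
  rintro _ ⟨a, ha, rfl⟩
  calc φ (F a) ≤ ‖F a‖ := hφ _
    _ ≤ ‖F‖ * ‖a‖ := F.le_opNorm a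
    _ ≤ ‖F‖ * M := mul_le_mul_of_nonneg_left (hM a ha) (norm_nonneg F)

/-- Let `A` be a separable closed convex bounded subset of a Banach space `X`.
If there is a countable subset `D` of `X*` which is dense for the seminorm
`ρ_A(f) = sup {|f a| : a ∈ A}`, then `A` is an SCD set. -/
theorem statement2 {𝕜 : Type*} [RCLike 𝕜] {X : Type*} [NormedAddCommGroup X]
    [NormedSpace ℝ X] [NormedSpace 𝕜 X] [IsScalarTower ℝ 𝕜 X] [CompleteSpace X]
    (A : Set X) (hclosed : IsClosed A) (hconv : Convex ℝ A) (hbdd : IsBounded A)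
    (hsep : TopologicalSpace.IsSeparable A)
    (D : Set (X →L[𝕜] 𝕜)) (hD : D.Countable)
    (hdense : ∀ f : X →L[𝕜] 𝕜, ∀ ε : ℝ, 0 < ε →
      ∃ g ∈ D, sSup ((fun a => ‖(f - g) a‖) '' A) < ε) :
    IsSCD 𝕜 A := by
  obtain ⟨g0, hg0D, -⟩ := hdense 0 1 one_pos
  obtain ⟨d, hd⟩ := hD.exists_eq_range ⟨g0, hg0D⟩
  set S : ℕ → Set X := fun m =>
    Slice 𝕜 A (d m.unpair.1) (1 / (m.unpair.2 + 1)) with hS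
  refine ⟨S, fun m => ⟨d m.unpair.1, 1 / (m.unpair.2 + 1), by positivity, rfl⟩, ?_⟩
  intro B hBA hmeet a haA
  by_contra hnot
  obtain ⟨φ, u, hφC, hφa⟩ := geometric_hahn_banach_closed_point
    ((convex_convexHull ℝ B).closure) isClosed_closure hnot
  set f : X →L[𝕜] 𝕜 := φ.extendTo𝕜' with hf
  have hre : ∀ x, RCLike.re (f x) = φ x := fun x => φ.toLinearMap.extendTo𝕜'_apply_re x
  set ε := φ a - u with hε
  have hεpos : 0 < ε := sub_pos.2 hφa
  obtain ⟨g, hgD, hg⟩ := hdense f (ε / 4) (by positivity)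
  have hgA : ∀ x ∈ A, ‖f x - g x‖ < ε / 4 := by
    intro x hx
    calc ‖f x - g x‖ ≤ sSup ((fun a => ‖(f - g) a‖) '' A) := by
          refine le_csSup (bddAbove_aux hbdd (f - g) (fun z => ‖z‖) (fun z => le_rfl)) ?_
          exact ⟨x, hx, by simp⟩
      _ < ε / 4 := hg
  obtain ⟨n, hn⟩ : ∃ n, d n = g := by rw [hd] at hgD; exact hgD
  obtain ⟨k, hk⟩ := exists_nat_one_div_lt (show (0:ℝ) < ε / 4 by positivity)
  obtain ⟨x, hxB, hxS⟩ := hmeet (Nat.pair n k)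
  rw [hS] at hxS
  simp only [Nat.unpair_pair, hn] at hxS
  obtain ⟨hxA, hxlt⟩ := hxS
  have hsup : RCLike.re (g a) ≤ sSup ((fun b => RCLike.re (g b)) '' A) :=
    le_csSup (bddAbove_aux hbdd g _ (fun z => RCLike.re_le_norm z)) ⟨a, haA, rfl⟩
  have habs_x : |RCLike.re (f x) - RCLike.re (g x)| < ε / 4 := by
    calc |RCLike.re (f x) - RCLike.re (g x)| = |RCLike.re (f x - g x)| := by
          rw [map_sub]
      _ ≤ ‖f x - g x‖ := RCLike.abs_re_le_norm _
      _ < ε / 4 := hgA x (hBA hxB)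
  have habs_a : |RCLike.re (f a) - RCLike.re (g a)| < ε / 4 := by
    calc |RCLike.re (f a) - RCLike.re (g a)| = |RCLike.re (f a - g a)| := by
          rw [map_sub]
      _ ≤ ‖f a - g a‖ := RCLike.abs_re_le_norm _
      _ < ε / 4 := hgA a haA
  have hxC : φ x < u := hφC x (subset_closure (subset_convexHull ℝ B hxB))
  rw [abs_lt] at habs_x habs_a
  have h1 := hre x
  have h2 := hre a
  have h3 : (0:ℝ) < 1 / (k + 1) := by positivity
  linarith [hxlt, hsup, habs_x.1, habs_x.2, habs_a.1, habs_a.2]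
end

section
/- Let X be a separable real or complex Banach space with the Daugavet property. Then the closed unit ball B_X is not an SCD set; that is, for every sequence {S_n : n ∈ ℕ} of slices of B_X there exist points x_n ∈ S_n (n ∈ ℕ) and a point x_0 ∈ B_X such that x_0 does not belong to the closed convex hull of {x_n : n ∈ ℕ}. -/
open Bornology Metric

/-- `X` has the Daugavet property: every rank-one operator `x ↦ f(x) • y`
satisfies the Daugavet equation `‖Id + T‖ = 1 + ‖T‖`. -/
def DaugavetProperty (𝕜 : Type*) [RCLike 𝕜] (X : Type*) [NormedAddCommGroup X]
    [NormedSpace 𝕜 X] : Prop :=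
  ∀ (f : X →L[𝕜] 𝕜) (y : X),
    ‖ContinuousLinearMap.id 𝕜 X + f.smulRight y‖ = 1 + ‖f.smulRight y‖

section SCDAux
variable {𝕜 : Type*} [RCLike 𝕜] {X : Type*} [NormedAddCommGroup X] [NormedSpace 𝕜 X]

lemma exists_re_gt (f : X →L[𝕜] 𝕜) {w : ℝ} (hw : w < ‖f‖) :
    ∃ a : X, ‖a‖ ≤ 1 ∧ w < RCLike.re (f a) := by
  rcases lt_or_ge w 0 with h | h
  · exact ⟨0, by simp, by simpa using h⟩
  · obtain ⟨x, hx, hwx⟩ := f.exists_lt_apply_of_lt_opNorm hw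
    have hfx : f x ≠ 0 := by
      intro h0
      rw [h0] at hwx
      simp at hwx
      linarith
    refine ⟨((‖f x‖ : 𝕜) / f x) • x, ?_, ?_⟩
    · rw [norm_smul, norm_div, RCLike.norm_ofReal, abs_of_nonneg (norm_nonneg _),
        div_self (norm_ne_zero_iff.mpr hfx), one_mul]
      exact hx.le
    · rw [map_smul, smul_eq_mul, div_mul_cancel₀ _ hfx, RCLike.ofReal_re]
      exact hwx

lemma sSup_re_image (f : X →L[𝕜] 𝕜) :
    sSup ((fun a => RCLike.re (f a)) '' Metric.closedBall (0 : X) 1) = ‖f‖ := by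
  apply csSup_eq_of_forall_le_of_forall_lt_exists_gt
  · exact ⟨RCLike.re (f 0), ⟨0, by simp, rfl⟩⟩
  · rintro r ⟨a, ha, rfl⟩
    have ha1 : ‖a‖ ≤ 1 := by simpa [dist_zero_right] using ha
    calc RCLike.re (f a) ≤ ‖f a‖ := RCLike.re_le_norm _
      _ ≤ ‖f‖ * ‖a‖ := f.le_opNorm a
      _ ≤ ‖f‖ := mul_le_of_le_one_right (norm_nonneg f) ha1
  · intro w hw
    obtain ⟨a, ha1, ha2⟩ := exists_re_gt f hw
    exact ⟨RCLike.re (f a), ⟨a, by simpa [dist_zero_right] using ha1, rfl⟩, ha2⟩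

lemma mem_slice_iff {f : X →L[𝕜] 𝕜} {ε : ℝ} {z : X} :
    z ∈ Slice 𝕜 (Metric.closedBall (0 : X) 1) f ε ↔ ‖z‖ ≤ 1 ∧ ‖f‖ - ε < RCLike.re (f z) := by
  simp [Slice, sSup_re_image, dist_zero_right]

lemma slice_nonempty (f : X →L[𝕜] 𝕜) {ε : ℝ} (hε : 0 < ε) :
    (Slice 𝕜 (Metric.closedBall (0 : X) 1) f ε).Nonempty := by
  obtain ⟨a, ha1, ha2⟩ := exists_re_gt f (show ‖f‖ - ε < ‖f‖ by linarith)
  exact ⟨a, mem_slice_iff.mpr ⟨ha1, ha2⟩⟩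

lemma re_apply_le_of_norm_le {f : X →L[𝕜] 𝕜} {z : X} (hz : ‖z‖ ≤ 1) :
    RCLike.re (f z) ≤ ‖f‖ :=
  le_trans (RCLike.re_le_norm _) (le_trans (f.le_opNorm z)
    (mul_le_of_le_one_right (norm_nonneg f) hz))



lemma lemA (hDP : DaugavetProperty 𝕜 X) {f : X →L[𝕜] 𝕜} (hf : ‖f‖ = 1) (y : X)
    {ε δ : ℝ} (hε : 0 < ε) (hε1 : ε < 1) (hδ : 0 < δ) :
    ∃ z : X, ‖z‖ ≤ 1 ∧ 1 - ε < RCLike.re (f z) ∧ 1 + ‖y‖ - δ < ‖y + z‖ := by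
  by_cases hy : y = 0
  · have hmin : (0:ℝ) < min ε δ := lt_min hε hδ
    obtain ⟨a, ha1, ha2⟩ : ∃ a : X, ‖a‖ ≤ 1 ∧ 1 - min ε δ < RCLike.re (f a) := by
      have : 1 - min ε δ < ‖f‖ := by rw [hf]; linarith
      obtain ⟨a, h1, h2⟩ := f.exists_lt_apply_of_lt_opNorm this
      rcases eq_or_ne (f a) 0 with h0 | h0
      · refine ⟨0, by simp, ?_⟩
        exfalso
        rw [h0, norm_zero] at h2
        have h3 : 1 < ε ⊓ δ := by linarith
        linarith [min_le_left ε δ]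
      · refine ⟨((‖f a‖ : 𝕜) / f a) • a, ?_, ?_⟩
        · rw [norm_smul, norm_div, RCLike.norm_ofReal, abs_of_nonneg (norm_nonneg _),
            div_self (norm_ne_zero_iff.mpr h0), one_mul]
          exact h1.le
        · rw [map_smul, smul_eq_mul, div_mul_cancel₀ _ h0, RCLike.ofReal_re]; exact h2
    have hfa_le : RCLike.re (f a) ≤ ‖a‖ := by
      calc RCLike.re (f a) ≤ ‖f a‖ := RCLike.re_le_norm _
        _ ≤ ‖f‖ * ‖a‖ := f.le_opNorm a
        _ = ‖a‖ := by rw [hf, one_mul]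
    refine ⟨a, ha1, by linarith [min_le_left ε δ], ?_⟩
    rw [hy, zero_add, norm_zero]
    have := min_le_right ε δ
    linarith
  · have hy0 : 0 < ‖y‖ := norm_pos_iff.mpr hy
    set η : ℝ := min (δ / 2) (ε * ‖y‖) with hηdef
    have hη0 : 0 < η := lt_min (by linarith) (by positivity)
    have hT : ‖f.smulRight y‖ = ‖y‖ := by
      rw [ContinuousLinearMap.norm_smulRight_apply, hf, one_mul]
    have hid := hDP f y
    obtain ⟨x, hx1, hx2⟩ := (ContinuousLinearMap.id 𝕜 X + f.smulRight y).exists_lt_apply_of_lt_opNorm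
      (r := 1 + ‖y‖ - η) (by rw [hid, hT]; linarith)
    rw [ContinuousLinearMap.add_apply, ContinuousLinearMap.id_apply,
      ContinuousLinearMap.smulRight_apply] at hx2
    have hfx_le : ‖f x‖ ≤ 1 := by
      calc ‖f x‖ ≤ ‖f‖ * ‖x‖ := f.le_opNorm x
        _ = ‖x‖ := by rw [hf, one_mul]
        _ ≤ 1 := hx1.le
    have h1 : ‖y‖ - η < ‖f x‖ * ‖y‖ := by
      have : ‖x + f x • y‖ ≤ ‖x‖ + ‖f x • y‖ := norm_add_le _ _
      rw [norm_smul] at this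
      nlinarith [hx1]
    have hfx_lb : 1 - η / ‖y‖ < ‖f x‖ := by
      have h2' : 1 - ‖f x‖ < η / ‖y‖ := (lt_div_iff₀ hy0).mpr (by nlinarith)
      linarith
    have hηy : η / ‖y‖ ≤ ε := by
      rw [div_le_iff₀ hy0]
      exact min_le_right _ _
    have hηδ : η ≤ δ / 2 := min_le_left _ _
    have hfx_pos : f x ≠ 0 := by
      intro h0
      rw [h0, norm_zero] at hfx_lb
      have : η / ‖y‖ ≤ ε := hηy
      linarith
    set c : 𝕜 := (‖f x‖ : 𝕜) / f x with hcdef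
    have hcnorm : ‖c‖ = 1 := by
      rw [hcdef, norm_div, RCLike.norm_ofReal, abs_of_nonneg (norm_nonneg _),
        div_self (norm_ne_zero_iff.mpr hfx_pos)]
    refine ⟨c • x, ?_, ?_, ?_⟩
    · rw [norm_smul, hcnorm, one_mul]; exact hx1.le
    · rw [map_smul, smul_eq_mul, hcdef, div_mul_cancel₀ _ hfx_pos, RCLike.ofReal_re]
      linarith
    · have hfz : f (c • x) = (‖f x‖ : 𝕜) := by
        rw [map_smul, smul_eq_mul, hcdef, div_mul_cancel₀ _ hfx_pos]
      have hzkey : ‖c • x + f (c • x) • y‖ = ‖x + f x • y‖ := by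
        rw [hfz]
        have : c • x + (‖f x‖ : 𝕜) • y = c • (x + f x • y) := by
          rw [smul_add, smul_smul, hcdef, div_mul_cancel₀ _ hfx_pos]
        rw [this, norm_smul, hcnorm, one_mul]
      have hdiff : ‖f (c • x) • y - y‖ < η := by
        rw [hfz, show (‖f x‖ : 𝕜) • y - y = ((‖f x‖ : 𝕜) - 1) • y by rw [sub_smul, one_smul],
          norm_smul]
        have : ‖(‖f x‖ : 𝕜) - 1‖ = 1 - ‖f x‖ := by
          rw [show ((‖f x‖ : 𝕜) - 1) = (((‖f x‖ - 1 : ℝ)) : 𝕜) by push_cast; ring,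
            RCLike.norm_ofReal, abs_of_nonpos (by linarith)]
          ring
        rw [this]
        calc (1 - ‖f x‖) * ‖y‖ < (η / ‖y‖) * ‖y‖ := by
              apply mul_lt_mul_of_pos_right _ hy0
              linarith
          _ = η := div_mul_cancel₀ _ (ne_of_gt hy0)
      have : ‖x + f x • y‖ ≤ ‖y + c • x‖ + ‖f (c • x) • y - y‖ := by
        rw [← hzkey]
        calc ‖c • x + f (c • x) • y‖ = ‖(y + c • x) + (f (c • x) • y - y)‖ := by
              congr 1; abel
          _ ≤ _ := norm_add_le _ _
      linarith


lemma nontrivial_of_DP (hDP : DaugavetProperty 𝕜 X) : Nontrivial X := by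
  by_contra h
  have hsub : Subsingleton X := not_nontrivial_iff_subsingleton.mp h
  have h0 := hDP 0 0
  have e : ∀ g : X →L[𝕜] X, g = 0 := fun g => by ext x; exact Subsingleton.elim _ _
  rw [e (ContinuousLinearMap.id 𝕜 X + (0 : X →L[𝕜] 𝕜).smulRight 0),
    e ((0 : X →L[𝕜] 𝕜).smulRight 0)] at h0
  simp at h0

lemma lemA' (hDP : DaugavetProperty 𝕜 X) (f : X →L[𝕜] 𝕜) {ε : ℝ} (hε : 0 < ε) (y : X)
    {δ : ℝ} (hδ : 0 < δ) :
    ∃ z, z ∈ Slice 𝕜 (Metric.closedBall (0 : X) 1) f ε ∧ 1 + ‖y‖ - δ < ‖y + z‖ := by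
  by_cases hf : ‖f‖ = 0
  · have : Nontrivial X := nontrivial_of_DP hDP
    obtain ⟨u, hu⟩ := exists_ne (0 : X)
    obtain ⟨g, hg1, -⟩ := exists_dual_vector 𝕜 u (norm_ne_zero_iff.mpr hu)
    obtain ⟨z, hz1, -, hz3⟩ := lemA hDP hg1 y (ε := 1/2) (by norm_num) (by norm_num) hδ
    have hf0 : f = 0 := by
      ext x; simpa using (ContinuousLinearMap.opNorm_zero_iff f).mp hf ▸ rfl
    refine ⟨z, mem_slice_iff.mpr ⟨hz1, ?_⟩, hz3⟩
    rw [hf, hf0]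
    simpa using hε
  · have hf0 : 0 < ‖f‖ := lt_of_le_of_ne (norm_nonneg f) (Ne.symm hf)
    set g : X →L[𝕜] 𝕜 := ((‖f‖⁻¹ : ℝ) : 𝕜) • f with hgdef
    have hg : ‖g‖ = 1 := by
      have h9 : ‖((‖f‖⁻¹ : ℝ) : 𝕜) • f‖ = ‖((‖f‖⁻¹ : ℝ) : 𝕜)‖ * ‖f‖ := norm_smul ((‖f‖⁻¹ : ℝ) : 𝕜) f
      rw [hgdef, h9, RCLike.norm_ofReal, abs_of_nonneg (by positivity), inv_mul_cancel₀ hf]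
    set ε' : ℝ := min (ε / ‖f‖) (1/2) with hε'def
    have hε'0 : 0 < ε' := lt_min (by positivity) (by norm_num)
    have hε'1 : ε' < 1 := lt_of_le_of_lt (min_le_right _ _) (by norm_num)
    obtain ⟨z, hz1, hz2, hz3⟩ := lemA hDP hg y hε'0 hε'1 hδ
    refine ⟨z, mem_slice_iff.mpr ⟨hz1, ?_⟩, hz3⟩
    have hre : RCLike.re (g z) = ‖f‖⁻¹ * RCLike.re (f z) := by
      have : g z = ((‖f‖⁻¹ : ℝ) : 𝕜) * f z := by
        rw [hgdef, ContinuousLinearMap.smul_apply, smul_eq_mul]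
      rw [this, RCLike.re_ofReal_mul]
    rw [hre] at hz2
    have hε'le : ε' ≤ ε / ‖f‖ := min_le_left _ _
    have h2 : ‖f‖ * (1 - ε') < ‖f‖ * (‖f‖⁻¹ * RCLike.re (f z)) :=
      mul_lt_mul_of_pos_left hz2 hf0
    rw [← mul_assoc, mul_inv_cancel₀ hf, one_mul] at h2
    have : ‖f‖ * ε' ≤ ε := by
      rw [← le_div_iff₀' hf0]
      exact hε'le
    nlinarith

lemma lemS (hDP : DaugavetProperty 𝕜 X) (f : X →L[𝕜] 𝕜) {ε : ℝ} (hε : 0 < ε) (y : X)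
    {δ : ℝ} (hδ : 0 < δ) :
    ∃ (h : X →L[𝕜] 𝕜) (β : ℝ), 0 < β ∧
      ∀ z ∈ Slice 𝕜 (Metric.closedBall (0 : X) 1) h β,
        z ∈ Slice 𝕜 (Metric.closedBall (0 : X) 1) f ε ∧ 1 + ‖y‖ - δ < ‖y + z‖ := by
  -- reduce to δ ≤ 1/2
  suffices H : ∀ δ' : ℝ, 0 < δ' → δ' ≤ 1/2 →
      ∃ (h : X →L[𝕜] 𝕜) (β : ℝ), 0 < β ∧
        ∀ z ∈ Slice 𝕜 (Metric.closedBall (0 : X) 1) h β,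
          z ∈ Slice 𝕜 (Metric.closedBall (0 : X) 1) f ε ∧ 1 + ‖y‖ - δ' < ‖y + z‖ by
    obtain ⟨h, β, hβ, hP⟩ := H (min δ (1/2)) (lt_min hδ (by norm_num)) (min_le_right _ _)
    exact ⟨h, β, hβ, fun z hz => ⟨(hP z hz).1,
      lt_of_le_of_lt (by linarith [min_le_left δ (1/2)]) (hP z hz).2⟩⟩
  intro δ' hδ' hδ'half
  obtain ⟨z₀, hz₀S, hz₀n⟩ := lemA' hDP f (show (0:ℝ) < ε/4 by linarith) y
    (show (0:ℝ) < δ'/4 by linarith)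
  obtain ⟨hz₀ball, hz₀re⟩ := mem_slice_iff.mp hz₀S
  have hyz₀ : y + z₀ ≠ 0 := by
    intro h0
    rw [h0, norm_zero] at hz₀n
    have := norm_nonneg y
    linarith
  obtain ⟨g, hg1, hg2⟩ := exists_dual_vector 𝕜 (y + z₀) (norm_ne_zero_iff.mpr hyz₀)
  have hre_sum : RCLike.re (g y) + RCLike.re (g z₀) = ‖y + z₀‖ := by
    have : RCLike.re (g (y + z₀)) = ‖y + z₀‖ := by rw [hg2, RCLike.ofReal_re]
    rw [map_add] at this
    simpa using this
  have hgz₀_le : RCLike.re (g z₀) ≤ 1 := by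
    calc RCLike.re (g z₀) ≤ ‖g z₀‖ := RCLike.re_le_norm _
      _ ≤ ‖g‖ * ‖z₀‖ := g.le_opNorm _
      _ ≤ 1 := by rw [hg1, one_mul]; exact hz₀ball
  have hgy_le : RCLike.re (g y) ≤ ‖y‖ := by
    calc RCLike.re (g y) ≤ ‖g y‖ := RCLike.re_le_norm _
      _ ≤ ‖g‖ * ‖y‖ := g.le_opNorm _
      _ = ‖y‖ := by rw [hg1, one_mul]
  have hgz₀_lb : 1 - δ'/4 < RCLike.re (g z₀) := by linarith
  have hgy_lb : ‖y‖ - δ'/4 < RCLike.re (g y) := by linarith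
  set c₁ : ℝ := 4/ε with hc₁def
  set c₂ : ℝ := 4/δ' with hc₂def
  have hc₁0 : 0 < c₁ := by positivity
  have hc₂0 : 0 < c₂ := by positivity
  set h : X →L[𝕜] 𝕜 := ((c₁ : ℝ) : 𝕜) • f + ((c₂ : ℝ) : 𝕜) • g with hhdef
  have hhre : ∀ w : X, RCLike.re (h w) = c₁ * RCLike.re (f w) + c₂ * RCLike.re (g w) := by
    intro w
    rw [hhdef]
    simp [RCLike.re_ofReal_mul]
  refine ⟨h, 1, one_pos, ?_⟩
  intro z hz
  obtain ⟨hzball, hzre⟩ := mem_slice_iff.mp hz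
  have hhz₀_le : RCLike.re (h z₀) ≤ ‖h‖ := re_apply_le_of_norm_le hz₀ball
  have hstar : c₁ * RCLike.re (f z) + c₂ * RCLike.re (g z) >
      c₁ * RCLike.re (f z₀) + c₂ * RCLike.re (g z₀) - 1 := by
    rw [← hhre, ← hhre]
    linarith
  have hfz_le : RCLike.re (f z) ≤ ‖f‖ := re_apply_le_of_norm_le hzball
  have hfz₀_le : RCLike.re (f z₀) ≤ ‖f‖ := re_apply_le_of_norm_le hz₀ball
  have hgz_le : RCLike.re (g z) ≤ 1 := by
    calc RCLike.re (g z) ≤ ‖g z‖ := RCLike.re_le_norm _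
      _ ≤ ‖g‖ * ‖z‖ := g.le_opNorm _
      _ ≤ 1 := by rw [hg1, one_mul]; exact hzball
  -- bound 1 : deficits
  have hv_lb : c₂ * (RCLike.re (g z₀) - RCLike.re (g z)) > -1 := by
    have : RCLike.re (g z₀) - RCLike.re (g z) > -(δ'/4) := by linarith
    have h4 := mul_lt_mul_of_pos_left this hc₂0
    have : c₂ * -(δ'/4) = -1 := by field_simp [hc₂def]; rw [hc₂def, div_mul_cancel₀ _ hδ'.ne']
    linarith
  have hu_lb : c₁ * (RCLike.re (f z₀) - RCLike.re (f z)) > -1 := by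
    have : RCLike.re (f z₀) - RCLike.re (f z) > -(ε/4) := by linarith
    have h4 := mul_lt_mul_of_pos_left this hc₁0
    have : c₁ * -(ε/4) = -1 := by field_simp [hc₁def]; rw [hc₁def, div_mul_cancel₀ _ hε.ne']
    linarith
  have hu_ub : c₁ * (RCLike.re (f z₀) - RCLike.re (f z)) < 2 := by linarith
  have hv_ub : c₂ * (RCLike.re (g z₀) - RCLike.re (g z)) < 2 := by linarith
  have hfz_lb : RCLike.re (f z₀) - RCLike.re (f z) < ε/2 := by
    have := (lt_div_iff₀' hc₁0).mpr hu_ub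
    have h5 : 2 / c₁ = ε/2 := by rw [hc₁def]; field_simp; ring
    linarith [this.trans_le (le_of_eq h5)]
  have hgz_lb : RCLike.re (g z₀) - RCLike.re (g z) < δ'/2 := by
    have := (lt_div_iff₀' hc₂0).mpr hv_ub
    have h5 : 2 / c₂ = δ'/2 := by rw [hc₂def]; field_simp; ring
    linarith [this.trans_le (le_of_eq h5)]
  constructor
  · exact mem_slice_iff.mpr ⟨hzball, by linarith⟩
  · have hkey : RCLike.re (g (y + z)) ≤ ‖y + z‖ := by
      calc RCLike.re (g (y + z)) ≤ ‖g (y + z)‖ := RCLike.re_le_norm _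
        _ ≤ ‖g‖ * ‖y + z‖ := g.le_opNorm _
        _ = ‖y + z‖ := by rw [hg1, one_mul]
    rw [map_add, map_add] at hkey
    linarith

lemma lemB (hDP : DaugavetProperty 𝕜 X) (l : List X) :
    ∀ (f : X →L[𝕜] 𝕜) {ε δ : ℝ}, 0 < ε → 0 < δ →
      ∃ z ∈ Slice 𝕜 (Metric.closedBall (0 : X) 1) f ε, ∀ y ∈ l, 1 + ‖y‖ - δ < ‖y + z‖ := by
  induction l with
  | nil =>
    intro f ε δ hε hδ
    obtain ⟨z, hz⟩ := slice_nonempty f hε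
    exact ⟨z, hz, by simp⟩
  | cons y l ih =>
    intro f ε δ hε hδ
    obtain ⟨h, β, hβ, hsub⟩ := lemS hDP f hε y hδ
    obtain ⟨z, hz, hl⟩ := ih h hβ hδ
    refine ⟨z, (hsub z hz).1, ?_⟩
    intro y' hy'
    rcases List.mem_cons.mp hy' with rfl | hy'
    · exact (hsub z hz).2
    · exact hl y' hy'

section real
variable [NormedSpace ℝ X]

lemma lemC (hDP : DaugavetProperty 𝕜 X) (f : X →L[𝕜] 𝕜) {ε δ : ℝ} (hε : 0 < ε) (hδ : 0 < δ)
    (l : List X) :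
    ∃ z ∈ Slice 𝕜 (Metric.closedBall (0 : X) 1) f ε,
      ∀ c ∈ convexHull ℝ {y : X | y ∈ l}, 1 + ‖c‖ - δ < ‖c + z‖ := by
  have hfin : ({y : X | y ∈ l}).Finite := l.finite_toSet
  have htb := (hfin.isCompact_convexHull (𝕜 := ℝ)).totallyBounded
  obtain ⟨t, htfin, htsub⟩ := Metric.totallyBounded_iff.mp htb (δ/4) (by positivity)
  obtain ⟨z, hz, hB⟩ := lemB hDP htfin.toFinset.toList f hε (show (0:ℝ) < δ/2 by positivity)
  refine ⟨z, hz, ?_⟩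
  intro c hc
  obtain ⟨yy, hyt, hyc⟩ := Set.mem_iUnion₂.mp (htsub hc)
  have h1 : 1 + ‖yy‖ - δ/2 < ‖yy + z‖ := by
    apply hB
    rw [Finset.mem_toList, Set.Finite.mem_toFinset]
    exact hyt
  have hd : ‖c - yy‖ < δ/4 := by
    rw [← dist_eq_norm]
    exact Metric.mem_ball.mp hyc
  have e1 : ‖yy + z‖ ≤ ‖c + z‖ + ‖yy - c‖ := by
    calc ‖yy + z‖ = ‖(c + z) + (yy - c)‖ := by congr 1; abel
      _ ≤ _ := norm_add_le _ _
  have e2 : ‖c‖ ≤ ‖yy‖ + ‖c - yy‖ := by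
    calc ‖c‖ = ‖yy + (c - yy)‖ := by congr 1; abel
      _ ≤ _ := norm_add_le _ _
  rw [norm_sub_rev] at e1
  linarith

lemma lemKey (hDP : DaugavetProperty 𝕜 X) (f : X →L[𝕜] 𝕜) {ε δ : ℝ} (hε : 0 < ε)
    (hδ : 0 < δ) (l : List X) :
    ∃ z, z ∈ Slice 𝕜 (Metric.closedBall (0 : X) 1) f ε ∧ 1 - δ < ‖z‖ ∧
      ∀ c ∈ convexHull ℝ {y : X | y ∈ l}, 1 + ‖c‖ - δ < ‖c + z‖ := by
  obtain ⟨z, hz, hc⟩ := lemC hDP f hε hδ ((0 : X) :: l)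
  have h0 : (0 : X) ∈ convexHull ℝ {y : X | y ∈ (0 : X) :: l} :=
    subset_convexHull ℝ _ (by simp)
  have hn := hc 0 h0
  rw [norm_zero, zero_add] at hn
  refine ⟨z, hz, by linarith, ?_⟩
  intro c hcc
  exact hc c (convexHull_mono (fun a ha => List.mem_cons.mpr (Or.inr ha)) hcc)

lemma main2 (hDP : DaugavetProperty 𝕜 X)
    (f : ℕ → X →L[𝕜] 𝕜) (ε : ℕ → ℝ) (hε : ∀ n, 0 < ε n) :
    ∃ x : ℕ → X, (∀ n, x n ∈ Slice 𝕜 (Metric.closedBall (0 : X) 1) (f n) (ε n)) ∧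
      ∃ x₀ ∈ Metric.closedBall (0 : X) 1, x₀ ∉ closure (convexHull ℝ (Set.range x)) := by
  classical
  set δ : ℕ → ℝ := fun n => (2 : ℝ)⁻¹ ^ (n + 2) with hδdef
  have hδ0 : ∀ n, 0 < δ n := fun n => by rw [hδdef]; positivity
  have hkey : ∀ (n : ℕ) (l : List X), ∃ z,
      z ∈ Slice 𝕜 (Metric.closedBall (0 : X) 1) (f n) (ε n) ∧ 1 - δ n < ‖z‖ ∧
      ∀ c ∈ convexHull ℝ {y : X | y ∈ l}, 1 + ‖c‖ - δ n < ‖c + z‖ :=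
    fun n l => lemKey hDP (f n) (hε n) (hδ0 n) l
  let step : ℕ → List X → X := fun n l => (hkey n l).choose
  let L : ℕ → List X := fun n => Nat.rec [] (fun k lk => step k lk :: lk) n
  let x : ℕ → X := fun n => step n (L n)
  have hLsucc : ∀ n, L (n + 1) = x n :: L n := fun n => rfl
  have hspec : ∀ n, x n ∈ Slice 𝕜 (Metric.closedBall (0 : X) 1) (f n) (ε n) ∧
      1 - δ n < ‖x n‖ ∧
      ∀ c ∈ convexHull ℝ {y : X | y ∈ L n}, 1 + ‖c‖ - δ n < ‖c + x n‖ :=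
    fun n => (hkey n (L n)).choose_spec
  have hLset : ∀ n, {y : X | y ∈ L n} = x '' Set.Iio n := by
    intro n
    induction n with
    | zero =>
      ext a
      constructor
      · intro ha; exact absurd ha (by simp [L])
      · rintro ⟨i, hi, rfl⟩; exact absurd hi (by simp)
    | succ k ih =>
      have h1 : {y : X | y ∈ L (k + 1)} = insert (x k) {y : X | y ∈ L k} := by
        ext a; simp [hLsucc k]
      rw [h1, ih, show Set.Iio (k + 1) = insert k (Set.Iio k) by
        ext i; simp only [Set.mem_Iio, Set.mem_insert_iff]; omega, Set.image_insert_eq]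
  have hxball : ∀ n, ‖x n‖ ≤ 1 := fun n => (mem_slice_iff.mp (hspec n).1).1
  have hconv_ball : ∀ N, convexHull ℝ (x '' Set.Iio N) ⊆ Metric.closedBall (0 : X) 1 := by
    intro N
    apply convexHull_min _ (convex_closedBall _ _)
    rintro _ ⟨i, -, rfl⟩
    simpa [dist_zero_right] using hxball i
  have hnorm : ∀ N, ∀ c ∈ convexHull ℝ (x '' Set.Iio N),
      1 - ∑ i ∈ Finset.range N, δ i ≤ ‖c‖ := by
    intro N
    induction N with
    | zero =>
      intro c hc
      exfalso
      rw [show Set.Iio 0 = (∅ : Set ℕ) by ext i; simp] at hc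
      simp [convexHull_empty] at hc
    | succ N ih =>
      have hIio : x '' Set.Iio (N + 1) = insert (x N) (x '' Set.Iio N) := by
        rw [show Set.Iio (N + 1) = insert N (Set.Iio N) by
          ext i; simp only [Set.mem_Iio, Set.mem_insert_iff]; omega, Set.image_insert_eq]
      have hsN : 0 ≤ ∑ i ∈ Finset.range N, δ i := Finset.sum_nonneg fun i _ => (hδ0 i).le
      by_cases hN : (x '' Set.Iio N).Nonempty
      · intro c hc
        rw [hIio, convexHull_insert hN] at hc
        obtain ⟨a, ha, b, hb, hseg⟩ := mem_convexJoin.mp hc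
        rw [Set.mem_singleton_iff] at ha
        subst ha
        obtain ⟨θ, τ, hθ, hτ, hsum, rfl⟩ := hseg
        have hbball : ‖b‖ ≤ 1 := by
          simpa [dist_zero_right] using hconv_ball N hb
        have hmain : 1 + ‖b‖ - δ N < ‖b + x N‖ := by
          apply (hspec N).2.2
          rw [hLset N]; exact hb
        have hd1 : θ • x N + τ • x N = x N := by rw [← add_smul, hsum, one_smul]
        have hd2 : θ • b + τ • b = b := by rw [← add_smul, hsum, one_smul]
        have hdecomp : ‖b + x N‖ ≤ ‖θ • x N + τ • b‖ + ‖τ • x N + θ • b‖ := by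
          calc ‖b + x N‖ = ‖(θ • x N + τ • b) + (τ • x N + θ • b)‖ := by
                congr 1
                calc b + x N = (θ • x N + τ • x N) + (θ • b + τ • b) := by
                      rw [hd1, hd2, add_comm]
                  _ = (θ • x N + τ • b) + (τ • x N + θ • b) := by abel
            _ ≤ _ := norm_add_le _ _
        have h3 : ‖τ • x N + θ • b‖ ≤ τ * 1 + θ * ‖b‖ := by
          calc ‖τ • x N + θ • b‖ ≤ ‖τ • x N‖ + ‖θ • b‖ := norm_add_le _ _
            _ = |τ| * ‖x N‖ + |θ| * ‖b‖ := by
                rw [norm_smul, norm_smul, Real.norm_eq_abs, Real.norm_eq_abs]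
            _ ≤ τ * 1 + θ * ‖b‖ := by
                rw [abs_of_nonneg hτ, abs_of_nonneg hθ]
                have := hxball N
                nlinarith [norm_nonneg b]
        have hib : 1 - ∑ i ∈ Finset.range N, δ i ≤ ‖b‖ := ih b hb
        rw [Finset.sum_range_succ]
        nlinarith [mul_nonneg hθ hsN,
          mul_nonneg hτ (show (0:ℝ) ≤ ‖b‖ - (1 - ∑ i ∈ Finset.range N, δ i) by linarith)]
      · intro c hc
        rw [Set.not_nonempty_iff_eq_empty] at hN
        rw [hIio, hN] at hc
        rw [show insert (x N) (∅ : Set X) = {x N} by simp, convexHull_singleton,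
          Set.mem_singleton_iff] at hc
        subst hc
        rw [Finset.sum_range_succ]
        have := (hspec N).2.1
        linarith
  have hsum_half : ∀ N, ∑ i ∈ Finset.range N, δ i ≤ 1 / 2 := by
    intro N
    have h1 : ∀ i, δ i = (1 / 4 : ℝ) * (1 / (2 : ℝ)) ^ i := by
      intro i
      simp only [hδdef]
      rw [pow_add]
      norm_num
      ring
    calc ∑ i ∈ Finset.range N, δ i = (1 / 4 : ℝ) * ∑ i ∈ Finset.range N, (1 / (2:ℝ)) ^ i := by
          rw [Finset.mul_sum]; exact Finset.sum_congr rfl fun i _ => h1 i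
      _ ≤ (1 / 4 : ℝ) * 2 := by
          have := sum_geometric_two_le N
          linarith
      _ = 1 / 2 := by norm_num
  have hhalf : ∀ c ∈ convexHull ℝ (Set.range x), (2 : ℝ)⁻¹ ≤ ‖c‖ := by
    intro c hc
    rw [convexHull_eq_union_convexHull_finite_subsets] at hc
    obtain ⟨t, ht, hct⟩ := Set.mem_iUnion₂.mp hc
    obtain ⟨N, hN⟩ : ∃ N, (↑t : Set X) ⊆ x '' Set.Iio N := by
      refine ⟨t.sup fun y => if h : ∃ i, x i = y then Nat.find h + 1 else 0, ?_⟩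
      intro a ha
      obtain ⟨i, hi⟩ := ht ha
      have hex : ∃ i, x i = a := ⟨i, hi⟩
      refine ⟨Nat.find hex, ?_, Nat.find_spec hex⟩
      have h2 : (if h : ∃ i, x i = a then Nat.find h + 1 else 0) ≤
          t.sup (fun y => if h : ∃ i, x i = y then Nat.find h + 1 else 0) :=
        Finset.le_sup (f := fun y => if h : ∃ i, x i = y then Nat.find h + 1 else 0) ha
      rw [dif_pos hex] at h2
      simp only [Set.mem_Iio]
      omega
    have := hnorm N c (convexHull_mono hN hct)
    have := hsum_half N
    have : (1:ℝ) - 1/2 ≤ ‖c‖ := by linarith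
    linarith
  refine ⟨x, fun n => (hspec n).1, 0, Metric.mem_closedBall_self (by norm_num), ?_⟩
  intro h0
  have hcl : closure (convexHull ℝ (Set.range x)) ⊆ {c : X | (2 : ℝ)⁻¹ ≤ ‖c‖} :=
    closure_minimal hhalf (isClosed_le continuous_const continuous_norm)
  have h1 := hcl h0
  rw [Set.mem_setOf_eq, norm_zero] at h1
  norm_num at h1

end real

end SCDAux

/-- If `X` is a separable Banach space with the Daugavet property, then the
closed unit ball of `X` is not an SCD set: for every sequence of slices of `B_X` one can
pick points `x n` in the slices and a point `x₀ ∈ B_X` outside the closed convex hull of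
the chosen points. -/
theorem statement3 {𝕜 : Type*} [RCLike 𝕜] {X : Type*} [NormedAddCommGroup X]
    [NormedSpace ℝ X] [NormedSpace 𝕜 X] [IsScalarTower ℝ 𝕜 X] [CompleteSpace X]
    [TopologicalSpace.SeparableSpace X]
    (hDP : DaugavetProperty 𝕜 X) :
    ¬ IsSCD 𝕜 (Metric.closedBall (0 : X) 1) ∧
    ∀ (f : ℕ → X →L[𝕜] 𝕜) (ε : ℕ → ℝ), (∀ n, 0 < ε n) →
      ∃ x : ℕ → X, (∀ n, x n ∈ Slice 𝕜 (Metric.closedBall (0 : X) 1) (f n) (ε n)) ∧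
        ∃ x₀ ∈ Metric.closedBall (0 : X) 1,
          x₀ ∉ closure (convexHull ℝ (Set.range x)) := by
  have main := main2 (𝕜 := 𝕜) (X := X) hDP
  refine ⟨?_, main⟩
  rintro ⟨S, hS, hdet⟩
  choose g εs hεs hSeq using hS
  obtain ⟨x, hx, x₀, hx₀B, hx₀⟩ := main g εs hεs
  have hsub : Set.range x ⊆ Metric.closedBall (0 : X) 1 := by
    rintro _ ⟨n, rfl⟩
    exact (hx n).1
  have h1 := hdet (Set.range x) hsub (fun n => ⟨x n, Set.mem_range_self n, by
    rw [hSeq n]; exact hx n⟩)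
  exact hx₀ (h1 hx₀B)
end

section
/- Let K be an uncountable metrizable compact topological space. Then the closed unit ball of C(K), the Banach space of continuous real-valued functions on K with the supremum norm, is not an SCD set. -/
open Bornology Metric

section Aux

variable {K : Type*} [MetricSpace K] [CompactSpace K]

/-- Points where the functional `f` has local "mass" at least `δ`. -/
def Atoms (f : C(K, ℝ) →L[ℝ] ℝ) (δ : ℝ) : Set K :=
  {t | ∀ r > (0 : ℝ), ∃ g : C(K, ℝ), ‖g‖ ≤ 1 ∧ tsupport ⇑g ⊆ Metric.ball t r ∧ δ ≤ f g}

lemma atoms_finite (f : C(K, ℝ) →L[ℝ] ℝ) {δ : ℝ} (hδ : 0 < δ) : (Atoms f δ).Finite := by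
  classical
  by_contra hinf
  obtain ⟨N, hN⟩ := exists_nat_gt (‖f‖ / δ)
  obtain ⟨s, hs_sub, hs_card⟩ := Set.Infinite.exists_subset_card_eq hinf N
  -- a separation radius for the finitely many points of `s`
  have hr : ∃ r > (0 : ℝ), ∀ i ∈ s, ∀ j ∈ s, i ≠ j →
      ¬ (Metric.ball i r ∩ Metric.ball j r).Nonempty := by
    by_cases h : s.offDiag.Nonempty
    · refine ⟨s.offDiag.inf' h (fun p => dist p.1 p.2) / 3, ?_, ?_⟩
      · have : ∀ p ∈ s.offDiag, (0 : ℝ) < dist p.1 p.2 := by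
          intro p hp
          rw [Finset.mem_offDiag] at hp
          exact dist_pos.mpr hp.2.2
        have := (Finset.lt_inf'_iff h).mpr this
        linarith
      · intro i hi j hj hij ⟨x, hxi, hxj⟩
        have hmem : (i, j) ∈ s.offDiag := Finset.mem_offDiag.mpr ⟨hi, hj, hij⟩
        have h1 : s.offDiag.inf' h (fun p => dist p.1 p.2) ≤ dist i j :=
          Finset.inf'_le _ hmem
        rw [Metric.mem_ball] at hxi hxj
        have h2 : dist i j ≤ dist x i + dist x j := by
          rw [dist_comm x i]; exact dist_triangle i x j
        have hd : (0 : ℝ) ≤ dist x i := dist_nonneg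
        linarith
    · refine ⟨1, one_pos, fun i hi j hj hij _ => h ⟨(i, j), Finset.mem_offDiag.mpr ⟨hi, hj, hij⟩⟩⟩
  obtain ⟨r, hr0, hrdisj⟩ := hr
  have hch : ∀ i ∈ s, ∃ g : C(K, ℝ), ‖g‖ ≤ 1 ∧ tsupport ⇑g ⊆ Metric.ball i r ∧ δ ≤ f g :=
    fun i hi => hs_sub hi r hr0
  choose! g hg1 hg2 hg3 using hch
  set G : C(K, ℝ) := ∑ i ∈ s, g i with hG
  have hGnorm : ‖G‖ ≤ 1 := by
    rw [ContinuousMap.norm_le _ zero_le_one]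
    intro x
    have hGx : G x = ∑ i ∈ s, g i x := by
      rw [hG]; simp
    by_cases hx : ∀ i ∈ s, g i x = 0
    · rw [hGx, Finset.sum_eq_zero hx]; simp
    · push_neg at hx
      obtain ⟨j, hj, hjx⟩ := hx
      have honly : ∀ i ∈ s, i ≠ j → g i x = 0 := by
        intro i hi hij
        by_contra hix
        have hxi : x ∈ Metric.ball i r :=
          hg2 i hi (subset_closure (Function.mem_support.mpr hix))
        have hxj : x ∈ Metric.ball j r :=
          hg2 j hj (subset_closure (Function.mem_support.mpr hjx))
        exact hrdisj i hi j hj hij ⟨x, hxi, hxj⟩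
      have hsum : G x = g j x := by
        rw [hGx]; exact Finset.sum_eq_single_of_mem j hj honly
      rw [hsum]
      exact le_trans (ContinuousMap.norm_coe_le_norm _ x) (hg1 j hj)
  have hlow : (N : ℝ) * δ ≤ f G := by
    have h1 : f G = ∑ i ∈ s, f (g i) := by rw [hG, map_sum]
    have h2 : ∑ i ∈ s, δ ≤ ∑ i ∈ s, f (g i) := Finset.sum_le_sum (fun i hi => hg3 i hi)
    rw [Finset.sum_const, hs_card, nsmul_eq_mul] at h2
    rw [h1]; exact h2
  have hup : f G ≤ ‖f‖ := by
    calc f G ≤ ‖f G‖ := le_abs_self _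
      _ ≤ ‖f‖ * ‖G‖ := f.le_opNorm G
      _ ≤ ‖f‖ * 1 := by
          exact mul_le_mul_of_nonneg_left hGnorm (norm_nonneg f)
      _ = ‖f‖ := mul_one _
  have : ‖f‖ < (N : ℝ) * δ := (div_lt_iff₀ hδ).mp hN
  linarith

lemma exists_slice_vanishing (f : C(K, ℝ) →L[ℝ] ℝ) {ε : ℝ} (hε : 0 < ε) (t₀ : K)
    (hna : ∀ δ > (0 : ℝ), t₀ ∉ Atoms f δ) :
    ∃ h : C(K, ℝ), h ∈ Slice ℝ (Metric.closedBall (0 : C(K, ℝ)) 1) f ε ∧ h t₀ = 0 := by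
  have hne : ((fun a => RCLike.re (f a)) '' Metric.closedBall (0 : C(K, ℝ)) 1).Nonempty :=
    ⟨_, ⟨0, Metric.mem_closedBall_self zero_le_one, rfl⟩⟩
  set M := sSup ((fun a => RCLike.re (f a)) '' Metric.closedBall (0 : C(K, ℝ)) 1) with hM
  obtain ⟨y, ⟨g, hg, rfl⟩, hgy⟩ := exists_lt_of_lt_csSup hne (show M - ε / 2 < M by linarith)
  have hgy' : M - ε / 2 < f g := hgy
  have hgnorm : ‖g‖ ≤ 1 := mem_closedBall_zero_iff.mp hg
  have hna' := hna (ε / 4) (by linarith)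
  rw [Atoms, Set.mem_setOf_eq] at hna'
  push_neg at hna'
  obtain ⟨r, hr0, hrg⟩ := hna'
  set φ : C(K, ℝ) := ⟨fun x => max 0 (1 - dist x t₀ / (r / 2)), by
    exact Continuous.max continuous_const
      (continuous_const.sub ((continuous_id.dist continuous_const).div_const _))⟩ with hφdef
  have hφ0 : ∀ x, 0 ≤ φ x := fun x => le_max_left _ _
  have hφ1 : ∀ x, φ x ≤ 1 := by
    intro x
    have : 0 ≤ dist x t₀ / (r / 2) := by positivity
    exact max_le zero_le_one (by linarith)
  have hφt : φ t₀ = 1 := by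
    simp [hφdef]
  have hφsupp : tsupport ⇑φ ⊆ Metric.ball t₀ r := by
    have h1 : Function.support ⇑φ ⊆ Metric.ball t₀ (r / 2) := by
      intro x hx
      rw [Function.mem_support] at hx
      rw [Metric.mem_ball]
      by_contra hd
      push_neg at hd
      apply hx
      show max 0 (1 - dist x t₀ / (r / 2)) = 0
      have : (1 : ℝ) ≤ dist x t₀ / (r / 2) := (one_le_div (by linarith)).mpr hd
      rw [max_eq_left (by linarith)]
    calc tsupport ⇑φ ⊆ closure (Metric.ball t₀ (r / 2)) := closure_mono h1
      _ ⊆ Metric.closedBall t₀ (r / 2) := Metric.closure_ball_subset_closedBall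
      _ ⊆ Metric.ball t₀ r := Metric.closedBall_subset_ball (by linarith)
  have hgxabs : ∀ x, |g x| ≤ 1 := fun x =>
    le_trans (ContinuousMap.norm_coe_le_norm g x) hgnorm
  have hgφnorm : ‖g * φ‖ ≤ 1 := by
    rw [ContinuousMap.norm_le _ zero_le_one]
    intro x
    rw [ContinuousMap.mul_apply, Real.norm_eq_abs, abs_mul]
    have h1 := hgxabs x
    have h2 : |φ x| ≤ 1 := abs_le.mpr ⟨by linarith [hφ0 x], hφ1 x⟩
    nlinarith [abs_nonneg (g x), abs_nonneg (φ x)]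
  have hgφsupp : tsupport ⇑(g * φ) ⊆ Metric.ball t₀ r := by
    refine subset_trans ?_ hφsupp
    rw [ContinuousMap.coe_mul]
    exact tsupport_mul_subset_right
  have hgφ : f (g * φ) < ε / 4 := hrg (g * φ) hgφnorm hgφsupp
  refine ⟨g - g * φ, ⟨?_, ?_⟩, ?_⟩
  · rw [mem_closedBall_zero_iff, ContinuousMap.norm_le _ zero_le_one]
    intro x
    simp only [ContinuousMap.sub_apply, ContinuousMap.mul_apply]
    rw [Real.norm_eq_abs]
    have heq : g x - g x * φ x = g x * (1 - φ x) := by ring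
    rw [heq, abs_mul]
    have h2 : |1 - φ x| ≤ 1 := abs_le.mpr ⟨by linarith [hφ1 x], by linarith [hφ0 x]⟩
    nlinarith [abs_nonneg (g x), hgxabs x]
  · show M - ε < RCLike.re (f (g - g * φ))
    rw [RCLike.re_to_real, map_sub]
    linarith
  · simp [hφt]

end Aux

/-- If `K` is an uncountable metrizable compact space, then the closed
unit ball of `C(K, ℝ)` (with the supremum norm) is not an SCD set. -/
theorem statement4 (K : Type*) [TopologicalSpace K] [CompactSpace K]
    [TopologicalSpace.MetrizableSpace K] [Uncountable K] :
    ¬ IsSCD ℝ (Metric.closedBall (0 : C(K, ℝ)) 1) := by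
  letI : MetricSpace K := TopologicalSpace.metrizableSpaceMetric K
  rintro ⟨S, hS, hdet⟩
  choose f ε hε hSeq using hS
  set Bad : Set K := ⋃ n, ⋃ m : ℕ, Atoms (f n) ((m : ℝ) + 1)⁻¹ with hBad
  have hBadc : Bad.Countable :=
    Set.countable_iUnion fun n => Set.countable_iUnion fun m =>
      (atoms_finite (f n) (by positivity)).countable
  have hBadne : Bad ≠ Set.univ := by
    intro h
    exact (Set.not_countable_univ_iff.mpr ‹Uncountable K›) (h ▸ hBadc)
  obtain ⟨t₀, ht₀⟩ := (Set.ne_univ_iff_exists_notMem Bad).mp hBadne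
  have hna : ∀ n, ∀ δ > (0 : ℝ), t₀ ∉ Atoms (f n) δ := by
    intro n δ hδ hmem
    obtain ⟨m, hm⟩ := exists_nat_gt δ⁻¹
    have hm' : ((m : ℝ) + 1)⁻¹ ≤ δ := by
      have h1 : (0 : ℝ) < (m : ℝ) + 1 := by positivity
      have h2 : 1 < δ * ((m : ℝ) + 1) := by
        have h3 : δ⁻¹ < (m : ℝ) + 1 := by linarith
        have := mul_lt_mul_of_pos_left h3 hδ
        rwa [mul_inv_cancel₀ (ne_of_gt hδ)] at this
      nlinarith [inv_pos.mpr h1, mul_inv_cancel₀ (ne_of_gt h1)]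
    have : t₀ ∈ Atoms (f n) ((m : ℝ) + 1)⁻¹ := by
      intro r hr
      obtain ⟨g, h1, h2, h3⟩ := hmem r hr
      exact ⟨g, h1, h2, le_trans hm' h3⟩
    exact ht₀ (Set.mem_iUnion.mpr ⟨n, Set.mem_iUnion.mpr ⟨m, this⟩⟩)
  choose h hmem hval using fun n =>
    exists_slice_vanishing (f n) (hε n) t₀ (hna n)
  have hBsub : Set.range h ⊆ Metric.closedBall (0 : C(K, ℝ)) 1 := by
    rintro _ ⟨n, rfl⟩
    exact (hmem n).1
  have hBmeet : ∀ n, (Set.range h ∩ S n).Nonempty := by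
    intro n
    exact ⟨h n, ⟨n, rfl⟩, by rw [hSeq n]; exact hmem n⟩
  have hsubset := hdet (Set.range h) hBsub hBmeet
  have hone : (1 : C(K, ℝ)) ∈ Metric.closedBall (0 : C(K, ℝ)) 1 := by
    rw [mem_closedBall_zero_iff, ContinuousMap.norm_le _ zero_le_one]
    intro x; simp
  have hE : closure (convexHull ℝ (Set.range h)) ⊆ {u : C(K, ℝ) | u t₀ = 0} := by
    apply closure_minimal
    · apply convexHull_min
      · rintro _ ⟨n, rfl⟩
        exact hval n
      · intro u hu v hv a b ha hb hab
        simp only [Set.mem_setOf_eq] at hu hv ⊢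
        simp [hu, hv]
    · exact isClosed_eq (continuous_eval_const t₀) continuous_const
  have := hE (hsubset hone)
  simp only [Set.mem_setOf_eq, ContinuousMap.one_apply] at this
  exact one_ne_zero this
end

section
/- Let X be a real or complex Banach space and let A be a convex bounded subset of X. If there exists a determining sequence {V_n : n ∈ ℕ} for A in which every V_n is a nonempty relatively weakly open subset of A (i.e. the intersection with A of an open set of the weak topology σ(X,X*)), then A is an SCD set, i.e. A admits a determining sequence consisting of slices. -/
open Bornology Metric Topology

/-- The weak topology `σ(X, X*)` on `X`: the coarsest topology making every continuous
linear functional continuous. -/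
def weakTopology (𝕜 : Type*) [RCLike 𝕜] (X : Type*) [SeminormedAddCommGroup X]
    [NormedSpace 𝕜 X] : TopologicalSpace X :=
  ⨅ f : X →L[𝕜] 𝕜, TopologicalSpace.induced f inferInstance

/-- `U ⊆ X` is open for the weak topology `σ(X, X*)`. -/
def WeaklyOpen (𝕜 : Type*) [RCLike 𝕜] {X : Type*} [SeminormedAddCommGroup X]
    [NormedSpace 𝕜 X] (U : Set X) : Prop :=
  IsOpen[weakTopology 𝕜 X] U


section Auxiliary

open Set Module Metric
open scoped RealInnerProductSpace


private lemma sum_extend_emb {ι κ M : Type*} [Fintype ι] [Fintype κ] [AddCommMonoid M]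
    [DecidableEq κ] (emb : ι ↪ κ) (G : ι → M) :
    ∑ j : κ, (if h : ∃ i, emb i = j then G h.choose else 0) = ∑ i, G i := by
  rw [← Finset.sum_subset (Finset.subset_univ (Finset.univ.image emb))]
  · rw [Finset.sum_image (fun a _ b _ hab => emb.injective hab)]
    refine Finset.sum_congr rfl fun i _ => ?_
    have h : ∃ i', emb i' = emb i := ⟨i, rfl⟩
    rw [dif_pos h]
    congr 1
    exact emb.injective h.choose_spec
  · intro j _ hj
    rw [dif_neg]
    intro ⟨i, hi⟩
    exact hj (Finset.mem_image.mpr ⟨i, Finset.mem_univ i, hi⟩)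

lemma isCompact_convexHull_fd {E : Type*} [NormedAddCommGroup E] [NormedSpace ℝ E]
    [FiniteDimensional ℝ E] {S : Set E} (hS : IsCompact S) : IsCompact (convexHull ℝ S) := by
  classical
  rcases S.eq_empty_or_nonempty with rfl | ⟨s0, hs0⟩
  · simpa using isCompact_empty
  set n := finrank ℝ E + 1 with hn
  have key : convexHull ℝ S =
      (fun p : (Fin n → ℝ) × (Fin n → E) => ∑ i, p.1 i • p.2 i) ''
        ((stdSimplex ℝ (Fin n)) ×ˢ Set.univ.pi fun _ => S) := by
    apply Subset.antisymm
    · intro x hx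
      obtain ⟨ι, hι, z, w, hzS, hai, hw0, hw1, hwz⟩ := eq_pos_convex_span_of_mem_convexHull hx
      letI : Fintype ι := hι
      have hcard : Fintype.card ι ≤ Fintype.card (Fin n) := by
        rw [Fintype.card_fin]
        refine le_trans hai.card_le_finrank_succ ?_
        show _ + 1 ≤ finrank ℝ E + 1
        gcongr
        exact Submodule.finrank_le _
      obtain ⟨emb⟩ := Function.Embedding.nonempty_of_card_le hcard
      refine ⟨(fun j => if h : ∃ i, emb i = j then w h.choose else 0,
               fun j => if h : ∃ i, emb i = j then z h.choose else s0), ⟨⟨?_, ?_⟩, ?_⟩, ?_⟩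
      · intro j
        dsimp only
        split
        · exact (hw0 _).le
        · exact le_rfl
      · exact (sum_extend_emb emb w).trans hw1
      · intro j _
        dsimp only
        split
        · exact hzS ⟨_, rfl⟩
        · exact hs0
      · dsimp only
        rw [← hwz, ← sum_extend_emb emb (fun i => w i • z i)]
        refine Finset.sum_congr rfl fun j _ => ?_
        by_cases h : ∃ i, emb i = j
        · rw [dif_pos h, dif_pos h, dif_pos h]
        · rw [dif_neg h, dif_neg h, dif_neg h, zero_smul]
    · rintro x ⟨⟨w, v⟩, ⟨hw, hv⟩, rfl⟩
      exact Convex.sum_mem (convex_convexHull ℝ S) (fun i _ => hw.1 i) hw.2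
        (fun i _ => subset_convexHull ℝ S (hv i (mem_univ i)))
  rw [key]
  exact ((isCompact_stdSimplex (𝕜 := ℝ) (ι := Fin n)).prod (isCompact_univ_pi fun _ => hS)).image
    (continuous_finset_sum _ fun i _ =>
      ((continuous_apply i).comp continuous_fst).smul ((continuous_apply i).comp continuous_snd))

lemma small_slice_near_extreme {F : Type*} [NormedAddCommGroup F] [InnerProductSpace ℝ F]
    [FiniteDimensional ℝ F] {K : Set F} (hK : IsCompact K) (hKc : Convex ℝ K)
    {e : F} (he : e ∈ K.extremePoints ℝ) {δ : ℝ} (hδ : 0 < δ) :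
    ∃ (c : F) (ε : ℝ), 0 < ε ∧
      ∀ y ∈ K, sSup ((fun z => ⟪c, z⟫) '' K) - ε < ⟪c, y⟫ → ‖y - e‖ < δ := by
  have heK : e ∈ K := he.1
  by_cases hS : (K \ ball e (δ / 2)).Nonempty
  case neg =>
    refine ⟨0, 1, one_pos, fun y hy _ => ?_⟩
    have : y ∈ ball e (δ / 2) := by
      by_contra h
      exact hS ⟨y, hy, h⟩
    rw [mem_ball, dist_eq_norm] at this
    linarith
  case pos =>
    -- the compact convex hull of the complement of the ball
    have hScpt : IsCompact (K \ ball e (δ / 2)) := hK.diff isOpen_ball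
    have hK'cpt : IsCompact (convexHull ℝ (K \ ball e (δ / 2))) := isCompact_convexHull_fd hScpt
    have heK' : e ∉ convexHull ℝ (K \ ball e (δ / 2)) := by
      have h1 := (hKc.mem_extremePoints_iff_mem_diff_convexHull_diff.mp he).2
      intro h
      refine h1 (convexHull_mono ?_ h)
      rintro y ⟨hyK, hyb⟩
      refine ⟨hyK, fun hye => hyb ?_⟩
      rw [Set.mem_singleton_iff] at hye
      subst hye
      simpa using half_pos hδ
    obtain ⟨f, u, hfu, hue⟩ := geometric_hahn_banach_closed_point
      (convex_convexHull ℝ _) hK'cpt.isClosed heK'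
    set v : F := (InnerProductSpace.toDual ℝ F).symm f with hv
    have hvf : ∀ x, ⟪v, x⟫ = f x := fun x => InnerProductSpace.toDual_symm_apply
    have hvne : v ≠ 0 := by
      obtain ⟨b, hb⟩ := hS
      intro h0
      have h1 : f b < u := hfu b (subset_convexHull ℝ _ hb)
      have h2 : f b = 0 := by rw [← hvf, h0, inner_zero_left]
      have h3 : f e = 0 := by rw [← hvf, h0, inner_zero_left]
      linarith
    obtain ⟨R₀, hR₀⟩ := hK.isBounded.subset_closedBall e
    set R : ℝ := max R₀ 1 with hR
    have hRpos : (0:ℝ) < R := lt_of_lt_of_le one_pos (le_max_right _ _)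
    have hRK : ∀ x ∈ K, ‖x - e‖ ≤ R := by
      intro x hx
      have := hR₀ hx
      rw [mem_closedBall, dist_eq_norm] at this
      exact le_trans this (le_max_left _ _)
    set γ : ℝ := f e - u with hγ
    have hγpos : 0 < γ := by simp [hγ]; linarith
    set t : ℝ := R ^ 2 / γ with ht
    have htpos : 0 < t := div_pos (by positivity) hγpos
    set p : F := e - t • v with hp
    -- the farthest point
    obtain ⟨xs, hxsK, hxsmax⟩ := hK.exists_isMaxOn ⟨e, heK⟩
      (continuous_norm.comp (continuous_id.sub continuous_const)).continuousOn
      (f := fun x => ‖x - p‖)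
    have hmaxle : ∀ x ∈ K, ‖x - p‖ ≤ ‖xs - p‖ := fun x hx => hxsmax hx
    -- square expansion
    have hsq : ∀ x : F, ‖x - p‖ ^ 2 = ‖x - e‖ ^ 2 + 2 * (t * ⟪x - e, v⟫) + t ^ 2 * ‖v‖ ^ 2 := by
      intro x
      have : x - p = (x - e) + t • v := by rw [hp]; abel
      rw [this, norm_add_sq_real, real_inner_smul_right, norm_smul, Real.norm_eq_abs,
        abs_of_pos htpos, mul_pow]
    have hepsq : ‖e - p‖ ^ 2 = t ^ 2 * ‖v‖ ^ 2 := by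
      rw [hsq e]; simp
    -- the farthest point is in the ball
    have hxsball : ‖xs - e‖ < δ / 2 := by
      by_contra hcon
      push_neg at hcon
      have hxsS : xs ∈ K \ ball e (δ / 2) := by
        refine ⟨hxsK, ?_⟩
        rw [mem_ball, dist_eq_norm]
        exact not_lt.mpr hcon
      have h1 : f xs < u := hfu xs (subset_convexHull ℝ _ hxsS)
      have h2 : ⟪xs - e, v⟫ = f xs - f e := by
        rw [real_inner_comm, inner_sub_right, hvf, hvf]
      have h3 : ‖xs - p‖ ^ 2 ≤ R ^ 2 + 2 * (t * (u - f e)) + t ^ 2 * ‖v‖ ^ 2 := by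
        rw [hsq xs, h2]
        have hR2 : ‖xs - e‖ ^ 2 ≤ R ^ 2 := by
          have := hRK xs hxsK
          nlinarith [norm_nonneg (xs - e)]
        nlinarith
      have h4 : ‖e - p‖ ^ 2 ≤ ‖xs - p‖ ^ 2 := by
        have := hmaxle e heK
        nlinarith [norm_nonneg (e - p)]
      rw [hepsq] at h4
      have hγne : γ ≠ 0 := ne_of_gt hγpos
      have h5 : t * (u - f e) = -(R ^ 2) := by
        have huf : u - f e = -γ := by rw [hγ]; ring
        rw [huf, ht]
        field_simp
      nlinarith [hRpos]
    set c : F := xs - p with hc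
    have hcnorm : ‖c‖ = ‖xs - p‖ := rfl
    have hcpos : 0 < ‖c‖ := by
      have h1 : ‖e - p‖ = t * ‖v‖ := by
        rw [hp]
        simp [norm_smul, abs_of_pos htpos]
      have h2 := hmaxle e heK
      have hv0 : 0 < ‖v‖ := norm_pos_iff.mpr hvne
      rw [hcnorm]
      nlinarith
    have hmax : ∀ x ∈ K, ⟪c, x⟫ ≤ ⟪c, xs⟫ := by
      intro x hx
      have h1 : ⟪c, x - p⟫ ≤ ‖c‖ * ‖x - p‖ := real_inner_le_norm c (x - p)
      have h2 : ‖x - p‖ ≤ ‖c‖ := by rw [hcnorm]; exact hmaxle x hx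
      have h3 : ⟪c, x⟫ = ⟪c, x - p⟫ + ⟪c, p⟫ := by
        rw [← inner_add_right]
        congr 1
        abel
      have h4 : ⟪c, xs⟫ = ‖c‖ ^ 2 + ⟪c, p⟫ := by
        rw [← real_inner_self_eq_norm_sq, ← inner_add_right]
        congr 1
        rw [hc]
        abel
      nlinarith
    have hgr : IsGreatest ((fun z => ⟪c, z⟫) '' K) ⟪c, xs⟫ :=
      ⟨⟨xs, hxsK, rfl⟩, by rintro w ⟨x, hx, rfl⟩; exact hmax x hx⟩
    refine ⟨c, δ ^ 2 / 8, by positivity, ?_⟩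
    intro y hy hsl
    rw [hgr.csSup_eq] at hsl
    have hyp : ⟪c, y - p⟫ > ‖c‖ ^ 2 - δ ^ 2 / 8 := by
      have h3 : ⟪c, y⟫ = ⟪c, y - p⟫ + ⟪c, p⟫ := by
        rw [← inner_add_right]
        congr 1
        abel
      have h4 : ⟪c, xs⟫ = ‖c‖ ^ 2 + ⟪c, p⟫ := by
        rw [← real_inner_self_eq_norm_sq, ← inner_add_right]
        congr 1
        rw [hc]
        abel
      linarith
    have hyx : ‖y - xs‖ ^ 2 < δ ^ 2 / 4 := by
      have hexp : ‖y - xs‖ ^ 2 = ‖y - p‖ ^ 2 - 2 * ⟪y - p, c⟫ + ‖c‖ ^ 2 := by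
        have hd : y - xs = (y - p) - c := by rw [hc]; abel
        rw [hd, norm_sub_sq_real]
      have h2 : ‖y - p‖ ≤ ‖c‖ := by rw [hcnorm]; exact hmaxle y hy
      have hsymm : ⟪y - p, c⟫ = ⟪c, y - p⟫ := real_inner_comm _ _
      have h2sq : ‖y - p‖ ^ 2 ≤ ‖c‖ ^ 2 := pow_le_pow_left₀ (norm_nonneg _) h2 2
      rw [hsymm] at hexp
      linarith [hyp, h2sq, hexp.le, hexp.ge]
    have hlt : ‖y - xs‖ < δ / 2 := by
      have h05 : (0:ℝ) ≤ δ / 2 := by positivity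
      refine lt_of_pow_lt_pow_left₀ 2 h05 ?_
      calc ‖y - xs‖ ^ 2 < δ ^ 2 / 4 := hyx
      _ = (δ / 2) ^ 2 := by ring
    calc ‖y - e‖ ≤ ‖y - xs‖ + ‖xs - e‖ := norm_sub_le_norm_sub_add_norm_sub _ _ _
    _ < δ / 2 + δ / 2 := add_lt_add hlt hxsball
    _ = δ := by ring

-- sSup of a set squeezed between s and closure s
lemma csSup_eq_of_between {s t : Set ℝ} (h1 : s ⊆ t) (h2 : t ⊆ closure s)
    (hne : s.Nonempty) (hb : BddAbove s) : sSup t = sSup s := by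
  obtain ⟨b, hbmem⟩ := hb
  have hcl : closure s ⊆ Set.Iic (sSup s) :=
    closure_minimal (fun y hy => le_csSup ⟨b, hbmem⟩ hy) isClosed_Iic
  have hub : ∀ x ∈ t, x ≤ sSup s := fun x hx => hcl (h2 hx)
  exact le_antisymm (csSup_le (hne.mono h1) hub)
    (csSup_le_csSup ⟨sSup s, fun x hx => hub x hx⟩ hne h1)

-- basic neighborhoods of the weak topology
lemma weak_nbhd {𝕜 : Type*} [RCLike 𝕜] {X : Type*} [SeminormedAddCommGroup X]
    [NormedSpace 𝕜 X] {U : Set X} (hU : WeaklyOpen 𝕜 U) {x0 : X} (hx0 : x0 ∈ U) :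
    ∃ (I : Finset (X →L[𝕜] 𝕜)) (δ : ℝ), 0 < δ ∧
      {x : X | ∀ f ∈ I, ‖f x - f x0‖ < δ} ⊆ U := by
  classical
  have hmem : U ∈ @nhds X (weakTopology 𝕜 X) x0 := by
    letI := weakTopology 𝕜 X
    exact IsOpen.mem_nhds hU hx0
  rw [weakTopology, nhds_iInf] at hmem
  rw [Filter.mem_iInf] at hmem
  obtain ⟨I, hIfin, V, hV, hUeq⟩ := hmem
  have hV' : ∀ i : I, ∃ ε : ℝ, 0 < ε ∧
      ∀ x : X, ‖(i : X →L[𝕜] 𝕜) x - (i : X →L[𝕜] 𝕜) x0‖ < ε → x ∈ V i := by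
    intro i
    have h := hV i
    rw [nhds_induced, Filter.mem_comap] at h
    obtain ⟨W, hW, hsub⟩ := h
    obtain ⟨ε, hε, hball⟩ := Metric.mem_nhds_iff.mp hW
    exact ⟨ε, hε, fun x hx => hsub (hball (by rwa [Metric.mem_ball, dist_eq_norm]))⟩
  choose ε hε hεsub using hV'
  haveI : Fintype I := hIfin.fintype
  rcases isEmpty_or_nonempty I with hIe | hIe
  · refine ⟨∅, 1, one_pos, fun x _ => ?_⟩
    rw [hUeq]
    exact Set.mem_iInter.mpr fun i => (IsEmpty.false i).elim
  · refine ⟨hIfin.toFinset, Finset.univ.inf' Finset.univ_nonempty ε, ?_, ?_⟩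
    · rw [Finset.lt_inf'_iff]
      exact fun i _ => hε i
    · intro x hx
      rw [hUeq]
      refine Set.mem_iInter.mpr fun i => hεsub i x ?_
      calc ‖(i : X →L[𝕜] 𝕜) x - (i : X →L[𝕜] 𝕜) x0‖
          < Finset.univ.inf' Finset.univ_nonempty ε :=
            hx (i : X →L[𝕜] 𝕜) (hIfin.mem_toFinset.mpr i.2)
        _ ≤ ε i := Finset.inf'_le ε (Finset.mem_univ i)

lemma eucl_coord_le {ι : Type*} [Fintype ι] (x : EuclideanSpace ℝ ι) (q : ι) : |x q| ≤ ‖x‖ := by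
  rw [EuclideanSpace.norm_eq, ← Real.sqrt_sq_eq_abs]
  refine Real.sqrt_le_sqrt ?_
  have := Finset.single_le_sum (f := fun i => ‖x i‖ ^ 2)
    (fun i _ => sq_nonneg _) (Finset.mem_univ q)
  simpa [Real.norm_eq_abs, sq_abs] using this

set_option maxHeartbeats 1000000 in
lemma key_slices {𝕜 : Type*} [RCLike 𝕜] {X : Type*} [NormedAddCommGroup X]
    [NormedSpace ℝ X] [NormedSpace 𝕜 X] [IsScalarTower ℝ 𝕜 X]
    {A : Set X} (hconv : Convex ℝ A) (hbdd : IsBounded A)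
    {U : Set X} (hUopen : WeaklyOpen 𝕜 U) {x0 : X} (hx0A : x0 ∈ A) (hx0U : x0 ∈ U) :
    ∃ (k : ℕ) (T : Fin k → Set X), (∀ j, IsSlice 𝕜 A (T j)) ∧
      ∀ B : Set X, (∀ j, (B ∩ T j).Nonempty) → ((convexHull ℝ B) ∩ (A ∩ U)).Nonempty := by
  classical
  obtain ⟨I, δ, hδ, hIsub⟩ := weak_nbhd hUopen hx0U
  let ι := {f // f ∈ I} × Bool
  obtain ⟨h, hht, hhf⟩ : ∃ h : ι → (X →L[𝕜] 𝕜),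
      (∀ f : {f // f ∈ I}, h (f, true) = (f : X →L[𝕜] 𝕜)) ∧
      (∀ f : {f // f ∈ I}, h (f, false) = (-(RCLike.I : 𝕜)) • (f : X →L[𝕜] 𝕜)) :=
    ⟨fun q => cond q.2 (q.1 : X →L[𝕜] 𝕜) ((-(RCLike.I : 𝕜)) • (q.1 : X →L[𝕜] 𝕜)),
      fun f => rfl, fun f => rfl⟩
  let E := EuclideanSpace ℝ ι
  obtain ⟨π, hπ⟩ : ∃ π : X →L[ℝ] E, ∀ (x : X) (q : ι), π x q = RCLike.re ((h q) x) :=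
    ⟨(ContinuousLinearEquiv.toContinuousLinearMap (EuclideanSpace.equiv ι ℝ).symm).comp
      (ContinuousLinearMap.pi fun q => (RCLike.reCLM).comp ((h q).restrictScalars ℝ)),
      fun x q => rfl⟩
  obtain ⟨G, hG⟩ : ∃ G : E → (X →L[𝕜] 𝕜), ∀ (c : E) (x : X),
      RCLike.re ((G c) x) = ⟪c, π x⟫ := by
    refine ⟨fun c => ∑ q : ι, (c q) • h q, fun c x => ?_⟩
    rw [PiLp.inner_apply]
    have h1 : (∑ q : ι, (c q) • h q) x = ∑ q : ι, (c q) • ((h q) x) := by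
      simp [ContinuousLinearMap.sum_apply, ContinuousLinearMap.smul_apply]
    rw [h1, map_sum RCLike.re _ _]
    refine Finset.sum_congr rfl fun q _ => ?_
    rw [RCLike.smul_re, hπ, RCLike.inner_apply, conj_trivial, mul_comm]
  have hDb : IsBounded (π '' A) := π.lipschitz.isBounded_image hbdd
  set K := closure (π '' A) with hKdef
  have hKcpt : IsCompact K := Metric.isCompact_of_isClosed_isBounded isClosed_closure hDb.closure
  have hKconv : Convex ℝ K := (hconv.is_linear_image ⟨π.map_add, π.map_smul⟩).closure
  have hπx0K : π x0 ∈ K := subset_closure ⟨x0, hx0A, rfl⟩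
  have hKM : closure (convexHull ℝ (K.extremePoints ℝ)) = K :=
    closure_convexHull_extremePoints hKcpt hKconv
  set r := δ / 2 with hr
  have hrpos : 0 < r := half_pos hδ
  have hmem : π x0 ∈ closure (convexHull ℝ (K.extremePoints ℝ)) := by rw [hKM]; exact hπx0K
  obtain ⟨p, hp, hpd⟩ := Metric.mem_closure_iff.mp hmem (r / 2) (by positivity)
  rw [convexHull_eq] at hp
  obtain ⟨ι', t, w, z, hw0, hw1, hz, hcm⟩ := hp
  have hslice : ∀ i : {a // a ∈ t}, ∃ (c : E) (ε : ℝ), 0 < ε ∧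
      ∀ y ∈ K, sSup ((fun v => ⟪c, v⟫) '' K) - ε < ⟪c, y⟫ → ‖y - z i‖ < r / 4 := fun i =>
    small_slice_near_extreme hKcpt hKconv (hz i i.2) (by positivity)
  choose c ε hε hc using hslice
  have hsup : ∀ i : {a // a ∈ t},
      sSup ((fun a => RCLike.re ((G (c i)) a)) '' A) = sSup ((fun v => ⟪c i, v⟫) '' K) := by
    intro i
    have him : (fun a => RCLike.re ((G (c i)) a)) '' A = (fun v => ⟪c i, v⟫) '' (π '' A) := by
      rw [Set.image_image]
      exact Set.image_congr fun a _ => hG (c i) a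
    rw [him]
    refine (csSup_eq_of_between
      (Set.image_mono (f := fun v => ⟪c i, v⟫) (subset_closure (s := π '' A))) ?_
      ⟨_, Set.mem_image_of_mem _ (Set.mem_image_of_mem _ hx0A)⟩ ?_).symm
    · exact image_closure_subset_closure_image (innerSL ℝ (c i)).continuous
    · exact ((innerSL ℝ (c i)).lipschitz.isBounded_image hDb).bddAbove
  let es : Fin t.card ≃ {a // a ∈ t} := t.equivFin.symm
  refine ⟨t.card, fun j => Slice 𝕜 A (G (c (es j))) (ε (es j)),
    fun j => ⟨_, _, hε _, rfl⟩, ?_⟩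
  intro B hB
  choose y hy using hB
  have hyB : ∀ j, y j ∈ B := fun j => (hy j).1
  have hyA : ∀ j, y j ∈ A := fun j => (hy j).2.1
  have hyS : ∀ j, ‖π (y j) - z (es j)‖ < r / 4 := by
    intro j
    have hsl := (hy j).2.2
    refine hc (es j) (π (y j)) (subset_closure ⟨y j, hyA j, rfl⟩) ?_
    rw [← hG (c (es j)) (y j), ← hsup (es j)]
    exact hsl
  -- sums over Fin t.card
  have hw1' : ∑ j : Fin t.card, w (es j) = 1 := by
    rw [Equiv.sum_comp es (fun i => w (i : ι'))]
    rw [← Finset.sum_coe_sort t w] at hw1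
    exact hw1
  have hw0' : ∀ j, 0 ≤ w (es j) := fun j => hw0 _ (es j).2
  have hpsum : p = ∑ j : Fin t.card, w (es j) • z (es j) := by
    rw [Equiv.sum_comp es (fun i => w (i : ι') • z (i : ι'))]
    rw [← hcm, Finset.centerMass_eq_of_sum_1 _ _ hw1, ← Finset.sum_coe_sort t (fun i => w i • z i)]
  set wpt : X := ∑ j : Fin t.card, w (es j) • y j with hwpt
  have hwptB : wpt ∈ convexHull ℝ B :=
    (convex_convexHull ℝ B).sum_mem (fun j _ => hw0' j) hw1'
      (fun j _ => subset_convexHull ℝ B (hyB j))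
  have hwptA : wpt ∈ A := hconv.sum_mem (fun j _ => hw0' j) hw1' (fun j _ => hyA j)
  -- the image point is close to π x0
  have hπwpt : π wpt = ∑ j : Fin t.card, w (es j) • π (y j) := by
    rw [hwpt, map_sum]
    exact Finset.sum_congr rfl fun j _ => by rw [π.map_smul]
  have hd1 : ‖π wpt - p‖ ≤ r / 4 := by
    rw [hπwpt, hpsum, ← Finset.sum_sub_distrib]
    have : ∀ j : Fin t.card, w (es j) • π (y j) - w (es j) • z (es j)
        = w (es j) • (π (y j) - z (es j)) := fun j => (smul_sub _ _ _).symm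
    rw [Finset.sum_congr rfl fun j _ => this j]
    calc ‖∑ j : Fin t.card, w (es j) • (π (y j) - z (es j))‖
        ≤ ∑ j : Fin t.card, ‖w (es j) • (π (y j) - z (es j))‖ := norm_sum_le _ _
      _ ≤ ∑ j : Fin t.card, w (es j) * (r / 4) := by
          refine Finset.sum_le_sum fun j _ => ?_
          rw [norm_smul, Real.norm_eq_abs, abs_of_nonneg (hw0' j)]
          exact mul_le_mul_of_nonneg_left (hyS j).le (hw0' j)
      _ = r / 4 := by rw [← Finset.sum_mul, hw1', one_mul]
  have hd2 : ‖π wpt - π x0‖ < r := by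
    have h3 : ‖p - π x0‖ < r / 2 := by
      rw [← dist_eq_norm, dist_comm]
      exact hpd
    calc ‖π wpt - π x0‖ = ‖(π wpt - p) + (p - π x0)‖ := by rw [sub_add_sub_cancel]
      _ ≤ ‖π wpt - p‖ + ‖p - π x0‖ := norm_add_le _ _
      _ < r / 4 + r / 2 := by linarith
      _ ≤ r := by linarith
  -- coordinates
  have hcoord : ∀ q : ι, |RCLike.re ((h q) wpt) - RCLike.re ((h q) x0)| < r := by
    intro q
    have h4 : (π wpt - π x0) q = π wpt q - π x0 q := rfl
    have h5 := eucl_coord_le (π wpt - π x0) q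
    rw [h4, hπ wpt q, hπ x0 q] at h5
    exact lt_of_le_of_lt h5 hd2
  have hwptU : wpt ∈ U := by
    refine hIsub ?_
    intro f hf
    have hre := hcoord (⟨f, hf⟩, true)
    have him := hcoord (⟨f, hf⟩, false)
    rw [hht ⟨f, hf⟩] at hre
    rw [hhf ⟨f, hf⟩] at him
    have him2 : |RCLike.im (f wpt) - RCLike.im (f x0)| < r := by
      have e1 : ∀ x : X, RCLike.re (((-(RCLike.I : 𝕜)) • f) x) = RCLike.im (f x) := by
        intro x
        rw [ContinuousLinearMap.smul_apply, smul_eq_mul, neg_mul, map_neg, RCLike.I_mul_re,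
          neg_neg]
      rw [e1 wpt, e1 x0] at him
      exact him
    have hnorm : ‖f wpt - f x0‖ < δ := by
      have hsq : ‖f wpt - f x0‖ ^ 2 < δ ^ 2 := by
        rw [RCLike.norm_sq_eq_def, map_sub, map_sub]
        have ha2 : (RCLike.re (f wpt) - RCLike.re (f x0)) ^ 2 < r ^ 2 := by
          nlinarith [sq_abs (RCLike.re (f wpt) - RCLike.re (f x0)),
            abs_nonneg (RCLike.re (f wpt) - RCLike.re (f x0)), hre]
        have hb2 : (RCLike.im (f wpt) - RCLike.im (f x0)) ^ 2 < r ^ 2 := by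
          nlinarith [sq_abs (RCLike.im (f wpt) - RCLike.im (f x0)),
            abs_nonneg (RCLike.im (f wpt) - RCLike.im (f x0)), him2]
        have hr2 : r = δ / 2 := hr
        nlinarith [ha2, hb2, hδ]
      exact lt_of_pow_lt_pow_left₀ 2 hδ.le hsq
    exact hnorm
  exact ⟨wpt, hwptB, hwptA, hwptU⟩

end Auxiliary

/-- If a convex bounded subset `A` of a Banach space admits a determining
sequence consisting of nonempty relatively weakly open subsets of `A`, then `A` is an SCD
set, i.e. it admits a determining sequence consisting of slices. -/
theorem statement5 {𝕜 : Type*} [RCLike 𝕜] {X : Type*} [NormedAddCommGroup X]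
    [NormedSpace ℝ X] [NormedSpace 𝕜 X] [IsScalarTower ℝ 𝕜 X] [CompleteSpace X]
    (A : Set X) (hconv : Convex ℝ A) (hbdd : IsBounded A)
    (V : ℕ → Set X)
    (hopen : ∀ n, ∃ U : Set X, WeaklyOpen 𝕜 U ∧ V n = A ∩ U)
    (hne : ∀ n, (V n).Nonempty)
    (hdet : Determining A V) :
    IsSCD 𝕜 A := by
  classical
  choose U hUopen hVU using hopen
  have hx0 : ∀ n, ∃ x, x ∈ A ∧ x ∈ U n := by
    intro n
    obtain ⟨x, hx⟩ := hne n
    rw [hVU n] at hx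
    exact ⟨x, hx.1, hx.2⟩
  have key : ∀ n, ∃ (k : ℕ) (T : Fin k → Set X), (∀ j, IsSlice 𝕜 A (T j)) ∧
      ∀ B : Set X, (∀ j, (B ∩ T j).Nonempty) → ((convexHull ℝ B) ∩ (A ∩ (U n))).Nonempty := by
    intro n
    obtain ⟨x, hxA, hxU⟩ := hx0 n
    exact key_slices hconv hbdd (hUopen n) hxA hxU
  choose k T hTslice hTdet using key
  let e : ℕ ≃ ℕ × ℕ := (Denumerable.eqv (ℕ × ℕ)).symm
  let S : ℕ → Set X := fun m =>
    if hlt : (e m).2 < k (e m).1 then T (e m).1 ⟨(e m).2, hlt⟩ else Slice 𝕜 A 0 1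
  refine ⟨S, fun m => ?_, ?_⟩
  · dsimp only [S]
    split
    · exact hTslice _ _
    · exact ⟨0, 1, one_pos, rfl⟩
  · intro B hBA hBmeet
    have hBT : ∀ n (j : Fin (k n)), (B ∩ T n j).Nonempty := by
      intro n j
      have hm := hBmeet (e.symm (n, (j : ℕ)))
      have hSm : S (e.symm (n, (j : ℕ))) = T n j := by
        dsimp only [S]
        rw [e.apply_symm_apply]
        exact dif_pos j.2
      rw [hSm] at hm
      exact hm
    have hconvB : ∀ n, ((convexHull ℝ B) ∩ V n).Nonempty := by
      intro n
      rw [hVU n]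
      exact hTdet n B (fun j => hBT n j)
    intro x hx
    have h2 := hdet (convexHull ℝ B) (convexHull_min hBA hconv) hconvB hx
    rwa [(convex_convexHull ℝ B).convexHull_eq] at h2
end

section
/- Let X be a real or complex Banach space and let A be a separable closed convex bounded subset of X having small combinations of slices, i.e. for every slice S of A and every ε > 0 there exist slices S_1, …, S_m of A and positive numbers λ_1, …, λ_m with λ_1 + … + λ_m = 1 such that the set λ_1 S_1 + … + λ_m S_m is contained in S and has diameter less than ε. Then A is an SCD set. -/
open Bornology Metric Topology

open Pointwise in
/-- `W` is a convex combination of slices of `A`: `W = λ₁ S₁ + ⋯ + λₘ Sₘ` (Minkowski sum)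
where the `Sᵢ` are slices of `A` and the `λᵢ` are positive reals summing to `1`. -/
def IsConvexCombOfSlices (𝕜 : Type*) [RCLike 𝕜] {X : Type*} [SeminormedAddCommGroup X]
    [NormedSpace ℝ X] [NormedSpace 𝕜 X] (A W : Set X) : Prop :=
  ∃ (m : ℕ) (lam : Fin m → ℝ) (S : Fin m → Set X),
    (∀ i, 0 < lam i) ∧ (∑ i, lam i) = 1 ∧ (∀ i, IsSlice 𝕜 A (S i)) ∧
    W = ∑ i, lam i • S i

/-- The whole set `A` is a slice of itself (with the zero functional). -/
lemma slice_zero_one_eq (𝕜 : Type*) [RCLike 𝕜] {X : Type*} [SeminormedAddCommGroup X]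
    [NormedSpace 𝕜 X] (A : Set X) : Slice 𝕜 A (0 : X →L[𝕜] 𝕜) 1 = A := by
  have himg : (fun a => RCLike.re ((0 : X →L[𝕜] 𝕜) a)) '' A = (fun _ : X => (0:ℝ)) '' A := by
    simp
  have hs : sSup ((fun a => RCLike.re ((0 : X →L[𝕜] 𝕜) a)) '' A) = 0 := by
    rw [himg]
    rcases A.eq_empty_or_nonempty with h | ⟨a, ha⟩
    · simp [h]
    · have : (fun _ : X => (0:ℝ)) '' A = {0} := by
        apply Set.Subset.antisymm
        · rintro r ⟨y, hy, rfl⟩; rfl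
        · rintro r rfl; exact ⟨a, ha, rfl⟩
      simp [this]
  ext y
  simp only [Slice, Set.mem_setOf_eq, hs, iff_self_and, and_iff_left_iff_imp]
  intro _
  simp

lemma isSlice_self (𝕜 : Type*) [RCLike 𝕜] {X : Type*} [SeminormedAddCommGroup X]
    [NormedSpace 𝕜 X] (A : Set X) : IsSlice 𝕜 A A :=
  ⟨0, 1, one_pos, (slice_zero_one_eq 𝕜 A).symm⟩

lemma slice_subset (𝕜 : Type*) [RCLike 𝕜] {X : Type*} [SeminormedAddCommGroup X]
    [NormedSpace 𝕜 X] (A : Set X) (f : X →L[𝕜] 𝕜) (ε : ℝ) : Slice 𝕜 A f ε ⊆ A :=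
  fun _ hx => hx.1

lemma isSlice_subset {𝕜 : Type*} [RCLike 𝕜] {X : Type*} [SeminormedAddCommGroup X]
    [NormedSpace 𝕜 X] {A S : Set X} (h : IsSlice 𝕜 A S) : S ⊆ A := by
  obtain ⟨f, ε, _, rfl⟩ := h; exact slice_subset 𝕜 A f ε

lemma slice_nonempty_s6 (𝕜 : Type*) [RCLike 𝕜] {X : Type*} [SeminormedAddCommGroup X]
    [NormedSpace 𝕜 X] {A : Set X} (hA : A.Nonempty) (f : X →L[𝕜] 𝕜) {ε : ℝ} (hε : 0 < ε) :
    (Slice 𝕜 A f ε).Nonempty := by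
  set M := sSup ((fun a => RCLike.re (f a)) '' A)
  have h1 : M - ε < M := by linarith
  obtain ⟨r, ⟨a, ha, rfl⟩, hra⟩ := exists_lt_of_lt_csSup (hA.image _) h1
  exact ⟨a, ha, hra⟩

lemma isSlice_nonempty {𝕜 : Type*} [RCLike 𝕜] {X : Type*} [SeminormedAddCommGroup X]
    [NormedSpace 𝕜 X] {A S : Set X} (hA : A.Nonempty) (h : IsSlice 𝕜 A S) : S.Nonempty := by
  obtain ⟨f, ε, hε, rfl⟩ := h; exact slice_nonempty_s6 𝕜 hA f hε

open Pointwise in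
/-- A convex combination of subsets of a convex set `A` is contained in `A`,
and it is nonempty if `A` is. -/
lemma convexCombOfSlices_subset {𝕜 : Type*} [RCLike 𝕜] {X : Type*} [SeminormedAddCommGroup X]
    [NormedSpace ℝ X] [NormedSpace 𝕜 X] {A W : Set X} (hconv : Convex ℝ A)
    (h : IsConvexCombOfSlices 𝕜 A W) : W ⊆ A := by
  obtain ⟨m, lam, Sl, hpos, hsum, hSl, rfl⟩ := h
  intro v hv
  rw [Set.mem_fintype_sum] at hv
  obtain ⟨g, hg, rfl⟩ := hv
  have : ∀ i, ∃ s ∈ Sl i, lam i • s = g i := fun i => hg i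
  choose s hs hgs using this
  have : ∑ i, g i = ∑ i, lam i • s i := by
    refine Finset.sum_congr rfl fun i _ => (hgs i).symm
  rw [this]
  exact hconv.sum_mem (fun i _ => (hpos i).le) hsum
    (fun i _ => isSlice_subset (hSl i) (hs i))

open Pointwise in
lemma convexCombOfSlices_nonempty {𝕜 : Type*} [RCLike 𝕜] {X : Type*} [SeminormedAddCommGroup X]
    [NormedSpace ℝ X] [NormedSpace 𝕜 X] {A W : Set X} (hA : A.Nonempty)
    (h : IsConvexCombOfSlices 𝕜 A W) : W.Nonempty := by
  obtain ⟨m, lam, Sl, hpos, hsum, hSl, rfl⟩ := h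
  have : ∀ i, ∃ g, g ∈ lam i • Sl i := by
    intro i
    obtain ⟨s, hs⟩ := isSlice_nonempty hA (hSl i)
    exact ⟨lam i • s, Set.smul_mem_smul_set hs⟩
  choose g hg using this
  exact ⟨∑ i, g i, (Set.mem_fintype_sum _ _).2 ⟨g, hg, rfl⟩⟩

open Pointwise

/-- A separable closed convex bounded subset `A` of a Banach space having
small combinations of slices (every slice of `A` contains convex combinations of slices of
arbitrarily small diameter) is an SCD set. -/
theorem statement6 {𝕜 : Type*} [RCLike 𝕜] {X : Type*} [NormedAddCommGroup X]
    [NormedSpace ℝ X] [NormedSpace 𝕜 X] [IsScalarTower ℝ 𝕜 X] [CompleteSpace X]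
    (A : Set X) (hclosed : IsClosed A) (hconv : Convex ℝ A) (hbdd : IsBounded A)
    (hsep : TopologicalSpace.IsSeparable A)
    (hscs : ∀ S : Set X, IsSlice 𝕜 A S → ∀ ε : ℝ, 0 < ε →
      ∃ W : Set X, IsConvexCombOfSlices 𝕜 A W ∧ W ⊆ S ∧ Metric.diam W < ε) :
    IsSCD 𝕜 A := by
  classical
  obtain ⟨c, hc_count, hc_dense⟩ := hsep
  obtain ⟨x, hx⟩ : ∃ x : ℕ → X, insert (0:X) c = Set.range x :=
    (hc_count.insert 0).exists_eq_range (Set.insert_nonempty _ _)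
  -- For each (n, k), choose (if possible) a convex combination of slices inside
  -- the ball `ball (x n) (1/(k+1))`.
  have key : ∀ n k : ℕ, ∃ (m : ℕ) (lam : Fin m → ℝ) (Sl : Fin m → Set X),
      (∀ i, 0 < lam i) ∧ (∑ i, lam i) = 1 ∧ (∀ i, IsSlice 𝕜 A (Sl i)) ∧
      ((∃ W, IsConvexCombOfSlices 𝕜 A W ∧ W ⊆ ball (x n) (1/(k+1))) →
        (∑ i, lam i • Sl i) ⊆ ball (x n) (1/(k+1))) := by
    intro n k
    by_cases h : ∃ W, IsConvexCombOfSlices 𝕜 A W ∧ W ⊆ ball (x n) (1/(k+1))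
    · obtain ⟨W, ⟨m, lam, Sl, h1, h2, h3, rfl⟩, hWb⟩ := h
      exact ⟨m, lam, Sl, h1, h2, h3, fun _ => hWb⟩
    · exact ⟨1, fun _ => 1, fun _ => A, fun _ => one_pos, by simp,
        fun _ => isSlice_self 𝕜 A, fun h' => absurd h' h⟩
  choose m lam Sl hpos hsum hSl hball using key
  -- The countable determining family of slices.
  set T : ℕ × ℕ × ℕ → Set X := fun p =>
    if h : p.2.2 < m p.1 p.2.1 then Sl p.1 p.2.1 ⟨p.2.2, h⟩ else A with hT
  let e : ℕ × ℕ × ℕ ≃ ℕ := Denumerable.eqv _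
  refine ⟨fun n => T (e.symm n), fun n => ?_, ?_⟩
  · rw [hT]
    dsimp only
    split
    · exact hSl _ _ _
    · exact isSlice_self 𝕜 A
  intro B hBA hB
  have hBmeet : ∀ n k (i : Fin (m n k)), (B ∩ Sl n k i).Nonempty := by
    intro n k i
    have h := hB (e (n, k, (i : ℕ)))
    have hTv : T (e.symm (e (n, k, (i : ℕ)))) = Sl n k i := by
      rw [Equiv.symm_apply_apply, hT]
      simp only []
      rw [dif_pos i.isLt]
    dsimp only at h
    rwa [hTv] at h
  have hBne : B.Nonempty := by
    obtain ⟨b, hb⟩ := hB 0; exact ⟨b, hb.1⟩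
  set D := closure (convexHull ℝ B) with hD
  -- the convex hull of B meets each chosen convex combination of slices
  have hmeets : ∀ n k, ∃ z, z ∈ convexHull ℝ B ∧ z ∈ ∑ i, lam n k i • Sl n k i := by
    intro n k
    choose b hbB hbS using hBmeet n k
    refine ⟨∑ i, lam n k i • b i, ?_, ?_⟩
    · exact (convex_convexHull ℝ B).sum_mem (fun i _ => (hpos n k i).le) (hsum n k)
        (fun i _ => subset_convexHull ℝ B (hbB i))
    · exact (Set.mem_fintype_sum _ _).2
        ⟨fun i => lam n k i • b i, fun i => Set.smul_mem_smul_set (hbS i), rfl⟩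
  intro z hzA
  by_contra hzD
  obtain ⟨f, u, hfD, hfz⟩ := RCLike.geometric_hahn_banach_closed_point (𝕜 := 𝕜)
    (convex_convexHull ℝ B).closure isClosed_closure hzD
  set M := sSup ((fun a => RCLike.re (f a)) '' A) with hM
  have hbound : BddAbove ((fun a => RCLike.re (f a)) '' A) := by
    obtain ⟨C, hC⟩ := isBounded_iff_forall_norm_le.1 hbdd
    refine ⟨‖f‖ * C, ?_⟩
    rintro r ⟨a, ha, rfl⟩
    calc RCLike.re (f a) ≤ ‖f a‖ := RCLike.re_le_norm _
      _ ≤ ‖f‖ * ‖a‖ := f.le_opNorm a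
      _ ≤ ‖f‖ * C := mul_le_mul_of_nonneg_left (hC a ha) (norm_nonneg f)
  have hzM : RCLike.re (f z) ≤ M := le_csSup hbound ⟨z, hzA, rfl⟩
  have huM : u < M := lt_of_lt_of_le hfz hzM
  set δ : ℝ := (M - u) / 2 with hδdef
  have hδ : 0 < δ := by rw [hδdef]; linarith
  set Sδ := Slice 𝕜 A f δ with hSδ
  have hSslice : IsSlice 𝕜 A Sδ := ⟨f, δ, hδ, rfl⟩
  obtain ⟨b, hbB⟩ := hBne
  have hbD : b ∈ D := subset_closure (subset_convexHull ℝ B hbB)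
  have hfb : RCLike.re (f b) < u := hfD b hbD
  have hfpos : (0:ℝ) < ‖f‖ := by
    rcases (norm_nonneg f).lt_or_eq with h | h
    · exact h
    · exfalso
      have : f = 0 := by rwa [eq_comm, norm_eq_zero] at h
      rw [this] at hfb hfz
      simp at hfb hfz
      linarith
  set ρ : ℝ := δ / ‖f‖ with hρdef
  have hρ : 0 < ρ := div_pos hδ hfpos
  -- points of the slice Sδ are at distance > ρ from D
  have hgap : ∀ y ∈ Sδ, ∀ d ∈ D, ρ < dist y d := by
    intro y hy d hd
    have h1 : M - δ < RCLike.re (f y) := hy.2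
    have h2 : RCLike.re (f d) < u := hfD d hd
    have h3 : RCLike.re (f y) - RCLike.re (f d) ≤ ‖f‖ * dist y d := by
      calc RCLike.re (f y) - RCLike.re (f d) = RCLike.re (f y - f d) := by
            rw [map_sub]
        _ ≤ ‖f y - f d‖ := RCLike.re_le_norm _
        _ = ‖f (y - d)‖ := by rw [map_sub]
        _ ≤ ‖f‖ * ‖y - d‖ := f.le_opNorm _
        _ = ‖f‖ * dist y d := by rw [dist_eq_norm]
    have h4 : δ < RCLike.re (f y) - RCLike.re (f d) := by
      rw [hδdef] at h1 ⊢; linarith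
    rw [hρdef, div_lt_iff₀ hfpos]
    calc δ < RCLike.re (f y) - RCLike.re (f d) := h4
      _ ≤ ‖f‖ * dist y d := h3
      _ = dist y d * ‖f‖ := mul_comm _ _
  obtain ⟨k, hk⟩ := exists_nat_one_div_lt (half_pos hρ)
  have hkpos : (0:ℝ) < 1 / (3 * ((k:ℝ) + 1)) := by positivity
  obtain ⟨W, hWcomb, hWS, hWdiam⟩ := hscs Sδ hSslice _ hkpos
  have hWA : W ⊆ A := convexCombOfSlices_subset hconv hWcomb
  obtain ⟨w, hw⟩ := convexCombOfSlices_nonempty ⟨z, hzA⟩ hWcomb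
  have hwA : w ∈ A := hWA hw
  -- pick a point of the dense sequence close to w
  obtain ⟨y, hyc, hwy⟩ := Metric.mem_closure_iff.1 (hc_dense hwA) _ hkpos
  obtain ⟨n, rfl⟩ : ∃ n, x n = y := by
    have : y ∈ Set.range x := hx ▸ Set.mem_insert_of_mem _ hyc
    exact this
  -- W is contained in the ball around x n of radius 1/(k+1)
  have hWbd : IsBounded W := hbdd.subset hWA
  set t : ℝ := 1 / ((k:ℝ) + 1) with htdef
  have ht : 0 < t := by rw [htdef]; positivity
  have h13 : (1:ℝ) / (3 * ((k:ℝ) + 1)) = t / 3 := by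
    rw [htdef, div_div, mul_comm]
  have hP : ∃ W', IsConvexCombOfSlices 𝕜 A W' ∧ W' ⊆ ball (x n) t := by
    refine ⟨W, hWcomb, fun v hv => ?_⟩
    have h1 : dist v w ≤ diam W := dist_le_diam_of_mem hWbd hv hw
    rw [mem_ball]
    have h2 : dist v (x n) ≤ dist v w + dist w (x n) := dist_triangle _ _ _
    have h4 : dist v w < t / 3 := by rw [← h13]; exact lt_of_le_of_lt h1 hWdiam
    have h5 : dist w (x n) < t / 3 := by rw [← h13]; exact hwy
    linarith
  obtain ⟨z', hz'conv, hz'sum⟩ := hmeets n k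
  have hz'ball : z' ∈ ball (x n) t := hball n k hP hz'sum
  have hz'D : z' ∈ D := subset_closure hz'conv
  have hwS : w ∈ Sδ := hWS hw
  have hgapwz : ρ < dist w z' := hgap w hwS z' hz'D
  have hdz : dist w z' ≤ dist w (x n) + dist (x n) z' := dist_triangle _ _ _
  have h5 : dist (x n) z' < t := by rw [dist_comm]; exact mem_ball.1 hz'ball
  have h6 : dist w (x n) < t / 3 := by rw [← h13]; exact hwy
  have htρ : t < ρ / 2 := hk
  linarith
end

section
/- Let X be a real or complex Banach space and let A be a convex bounded subset of X. If A, equipped with the topology induced by the weak topology σ(X,X*), has a countable π-base, then A is an SCD set. -/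
open Bornology Metric Topology

/-- The subset `A`, with the topology induced by the weak topology `σ(X, X*)`, has a
countable π-base: a countable family of nonempty relatively weakly open subsets of `A`
such that every nonempty relatively weakly open subset of `A` contains one of them. -/
def HasCountableWeakPiBase (𝕜 : Type*) [RCLike 𝕜] {X : Type*} [SeminormedAddCommGroup X]
    [NormedSpace 𝕜 X] (A : Set X) : Prop :=
  ∃ V : ℕ → Set X,
    (∀ n, (V n).Nonempty ∧ ∃ U : Set X, WeaklyOpen 𝕜 U ∧ V n = A ∩ U) ∧
    ∀ U : Set X, WeaklyOpen 𝕜 U → (A ∩ U).Nonempty → ∃ n, V n ⊆ A ∩ U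

section Auxiliary

open Set

/-- Auxiliary: a padded dite-sum equals the original sum. -/
lemma SCDAux.sum_dite_pad {M : Type*} [AddCommMonoid M] {ι : Type*} [Fintype ι]
    (g : ι → M) {n : ℕ} (h : Fintype.card ι ≤ n) :
    (∑ i : Fin n, if h' : (i : ℕ) < Fintype.card ι
      then g ((Fintype.equivFin ι).symm ⟨i, h'⟩) else 0) = ∑ j, g j := by
  classical
  set m := Fintype.card ι
  set F : ℕ → M := fun i => if h' : i < m then g ((Fintype.equivFin ι).symm ⟨i, h'⟩) else 0
    with hF
  have h1 : (∑ i : Fin n, F (i : ℕ)) = ∑ i ∈ Finset.range n, F i :=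
    Fin.sum_univ_eq_sum_range F n
  have h2 : (∑ i ∈ Finset.range n, F i) = ∑ i ∈ Finset.range m, F i := by
    refine (Finset.sum_subset (Finset.range_subset_range.2 h) ?_).symm
    intro i _ hi
    rw [Finset.mem_range] at hi
    simp [hF, hi]
  have h3 : (∑ i ∈ Finset.range m, F i) = ∑ i : Fin m, F (i : ℕ) :=
    (Fin.sum_univ_eq_sum_range F m).symm
  have h4 : (∑ i : Fin m, F (i : ℕ)) = ∑ i : Fin m, g ((Fintype.equivFin ι).symm i) := by
    refine Finset.sum_congr rfl fun i _ => ?_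
    simp [hF, i.isLt]
  rw [h1, h2, h3, h4, Equiv.sum_comp (Fintype.equivFin ι).symm g]

/-- In a finite dimensional normed space, the convex hull of a compact set is compact. -/
lemma SCDAux.isCompact_convexHull_of_isCompact {F : Type*} [NormedAddCommGroup F]
    [NormedSpace ℝ F] [FiniteDimensional ℝ F] {D : Set F} (hD : IsCompact D) :
    IsCompact (convexHull ℝ D) := by
  classical
  rcases D.eq_empty_or_nonempty with rfl | ⟨d₀, hd₀⟩
  · simp
  set n := Module.finrank ℝ F + 1 with hn
  have hφ : Continuous fun p : (Fin n → ℝ) × (Fin n → F) => ∑ i, p.1 i • p.2 i := by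
    fun_prop
  have hKc : IsCompact ((stdSimplex ℝ (Fin n)) ×ˢ Set.univ.pi fun _ : Fin n => D) :=
    (isCompact_stdSimplex _ _).prod (isCompact_univ_pi fun _ => hD)
  have him : convexHull ℝ D = (fun p : (Fin n → ℝ) × (Fin n → F) => ∑ i, p.1 i • p.2 i) ''
      ((stdSimplex ℝ (Fin n)) ×ˢ Set.univ.pi fun _ : Fin n => D) := by
    apply Subset.antisymm
    · intro x hx
      obtain ⟨ι, hι, z, w, hzD, hai, hw0, hw1, hxeq⟩ :=
        eq_pos_convex_span_of_mem_convexHull hx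
      have hcard : Fintype.card ι ≤ n := by
        refine le_trans hai.card_le_finrank_succ ?_
        have := Submodule.finrank_le (vectorSpan ℝ (Set.range z))
        omega
      set m := Fintype.card ι
      set e := Fintype.equivFin ι
      refine ⟨(fun i : Fin n => if h : (i : ℕ) < m then w (e.symm ⟨i, h⟩) else 0,
               fun i : Fin n => if h : (i : ℕ) < m then z (e.symm ⟨i, h⟩) else d₀),
              ⟨⟨fun i => ?_, ?_⟩, fun i _ => ?_⟩, ?_⟩
      · dsimp only
        split
        · exact le_of_lt (hw0 _)
        · exact le_rfl
      · dsimp only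
        rw [SCDAux.sum_dite_pad w hcard, hw1]
      · dsimp only
        split
        · exact hzD (Set.mem_range_self _)
        · exact hd₀
      · dsimp only
        rw [← hxeq]
        have : ∀ i : Fin n,
            (if h : (i : ℕ) < m then w (e.symm ⟨i, h⟩) else 0) •
              (if h : (i : ℕ) < m then z (e.symm ⟨i, h⟩) else d₀) =
            (if h : (i : ℕ) < m then w (e.symm ⟨i, h⟩) • z (e.symm ⟨i, h⟩) else 0) := by
          intro i; split <;> simp
        rw [Finset.sum_congr rfl fun i _ => this i]
        exact SCDAux.sum_dite_pad (fun j => w j • z j) hcard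
    · rintro _ ⟨⟨wp, zp⟩, ⟨hwp, hzp⟩, rfl⟩
      exact mem_convexHull_of_exists_fintype wp zp hwp.1 hwp.2
        (fun i => hzp i (Set.mem_univ i)) rfl
  rw [him]
  exact hKc.image hφ

/-- Extreme points of a compact convex set in finite dimensions admit small slices. -/
lemma SCDAux.extreme_small_slice {F : Type*} [NormedAddCommGroup F] [NormedSpace ℝ F]
    [FiniteDimensional ℝ F] {K : Set F} (hK : IsCompact K) (hKc : Convex ℝ K)
    {e : F} (he : e ∈ K.extremePoints ℝ) {r : ℝ} (hr : 0 < r) :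
    ∃ g : F →L[ℝ] ℝ, ∃ ε : ℝ, 0 < ε ∧
      ∀ v ∈ K, sSup (g '' K) - ε < g v → dist v e < r := by
  classical
  set D := K \ ball e r with hDdef
  have hDcl : IsClosed D := hK.isClosed.sdiff isOpen_ball
  have hDcp : IsCompact D := hK.of_isClosed_subset hDcl diff_subset
  by_cases hD : D = ∅
  · refine ⟨0, 1, one_pos, fun v hv _ => ?_⟩
    have h1 : v ∉ D := by rw [hD]; exact notMem_empty v
    have h2 : v ∈ ball e r := by
      by_contra hb
      exact h1 ⟨hv, hb⟩
    simpa [mem_ball] using h2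
  · have hC : IsCompact (convexHull ℝ D) := SCDAux.isCompact_convexHull_of_isCompact hDcp
    have heC : e ∉ convexHull ℝ D := by
      have h1 := (hKc.mem_extremePoints_iff_mem_diff_convexHull_diff).1 he
      intro hcon
      refine h1.2 (convexHull_mono ?_ hcon)
      intro y hy
      refine ⟨hy.1, fun hy' => hy.2 ?_⟩
      rw [mem_singleton_iff] at hy'
      subst hy'
      exact mem_ball_self hr
    obtain ⟨g, u, hgu, hue⟩ :=
      geometric_hahn_banach_closed_point (convex_convexHull ℝ D) hC.isClosed heC
    have hbdd : BddAbove (g '' K) := (hK.image g.continuous).bddAbove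
    have heM : g e ≤ sSup (g '' K) := le_csSup hbdd ⟨e, he.1, rfl⟩
    refine ⟨g, sSup (g '' K) - u, by linarith, fun v hv hgv => ?_⟩
    by_contra hvr
    have hvD : v ∈ D := ⟨hv, by simpa [mem_ball] using hvr⟩
    have := hgu v (subset_convexHull ℝ D hvD)
    linarith

variable {𝕜 : Type*} [RCLike 𝕜] {X : Type*}

/-- Open half-spaces are weakly open. -/
lemma SCDAux.weaklyOpen_halfspace [SeminormedAddCommGroup X] [NormedSpace 𝕜 X]
    (f : X →L[𝕜] 𝕜) (u : ℝ) :
    WeaklyOpen 𝕜 {x : X | u < RCLike.re (f x)} := by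
  have h1 : IsOpen[TopologicalSpace.induced f inferInstance] {x : X | u < RCLike.re (f x)} :=
    ⟨{c : 𝕜 | u < RCLike.re c}, isOpen_lt continuous_const RCLike.continuous_re, rfl⟩
  exact h1.mono (iInf_le _ f)

/-- Weakly open sets contain finite-dimensional "boxes". -/
lemma SCDAux.weakly_open_box [SeminormedAddCommGroup X] [NormedSpace 𝕜 X]
    {U : Set X} (hU : WeaklyOpen 𝕜 U) {x₀ : X} (hx : x₀ ∈ U) :
    ∃ (s : Finset (X →L[𝕜] 𝕜)) (δ : ℝ), 0 < δ ∧
      {x : X | ∀ f ∈ s, ‖f x - f x₀‖ < δ} ⊆ U := by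
  classical
  have hmem : U ∈ @nhds X (weakTopology 𝕜 X) x₀ := by
    letI := weakTopology 𝕜 X
    exact hU.mem_nhds hx
  rw [weakTopology, nhds_iInf] at hmem
  rw [Filter.mem_iInf] at hmem
  obtain ⟨I, hIfin, V, hV, hUeq⟩ := hmem
  have hδ : ∀ i : I, ∃ δ : ℝ, 0 < δ ∧
      (i : X →L[𝕜] 𝕜) ⁻¹' ball ((i : X →L[𝕜] 𝕜) x₀) δ ⊆ V i := by
    intro i
    have := hV i
    rw [nhds_induced, Filter.mem_comap] at this
    obtain ⟨t, ht, hsub⟩ := this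
    obtain ⟨δ, hδpos, hball⟩ := Metric.mem_nhds_iff.1 ht
    exact ⟨δ, hδpos, le_trans (Set.preimage_mono hball) hsub⟩
  choose δi hδipos hδisub using hδ
  haveI := hIfin.fintype
  rcases isEmpty_or_nonempty I with hI | hI
  · refine ⟨∅, 1, one_pos, fun x _ => ?_⟩
    rw [hUeq]
    exact Set.mem_iInter.2 fun i => (hI.false i).elim
  · have hne : (Finset.univ : Finset I).Nonempty := Finset.univ_nonempty
    set δ := Finset.univ.inf' hne δi with hδdef
    have hδpos : 0 < δ := by
      rw [hδdef, Finset.lt_inf'_iff]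
      exact fun i _ => hδipos i
    refine ⟨hIfin.toFinset, δ, hδpos, fun x hxb => ?_⟩
    rw [hUeq]
    refine Set.mem_iInter.2 fun i => ?_
    refine hδisub i ?_
    have hmem : (i : X →L[𝕜] 𝕜) ∈ hIfin.toFinset := hIfin.mem_toFinset.2 i.2
    have := hxb _ hmem
    rw [Set.mem_preimage, mem_ball, dist_eq_norm]
    exact lt_of_lt_of_le this (by rw [hδdef]; exact Finset.inf'_le _ (Finset.mem_univ i))

variable [NormedAddCommGroup X] [NormedSpace ℝ X] [NormedSpace 𝕜 X] [IsScalarTower ℝ 𝕜 X]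
variable {A : Set X}

/-- Bourgain's lemma, box form: given a bounded convex set `A`, a point `x₀ ∈ A` and a
finite family of functionals with a tolerance `δ`, there is a convex combination of slices
of `A` all of whose selections land in the `δ`-box around `x₀`. -/
lemma SCDAux.bourgain_box (hconv : Convex ℝ A) (hbdd : IsBounded A)
    {s : Finset (X →L[𝕜] 𝕜)} {δ : ℝ} (hδ : 0 < δ) {x₀ : X} (hx₀ : x₀ ∈ A) :
    ∃ (k : ℕ) (T : Fin k → Set X) (w : Fin k → ℝ),
      (∀ i, IsSlice 𝕜 A (T i)) ∧ (∀ i, 0 ≤ w i) ∧ (∑ i, w i) = 1 ∧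
      ∀ b : Fin k → X, (∀ i, b i ∈ T i) →
        ((∑ i, w i • b i) ∈ A ∧ ∀ f ∈ s, ‖f (∑ i, w i • b i) - f x₀‖ < δ) := by
  classical
  set E := (↥s → 𝕜) with hE
  set T : X →L[ℝ] E := ContinuousLinearMap.pi
    (fun f : ↥s => ((f : X →L[𝕜] 𝕜).restrictScalars ℝ)) with hT
  set K : Set E := closure (T '' A) with hK
  have hKcomp : IsCompact K := (T.lipschitz.isBounded_image hbdd).isCompact_closure
  have hKconv : Convex ℝ K := (hconv.linear_image (T : X →ₗ[ℝ] E)).closure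
  have hTA_sub_K : T '' A ⊆ K := subset_closure
  have hp : T x₀ ∈ K := hTA_sub_K ⟨x₀, hx₀, rfl⟩
  have hKM : closure (convexHull ℝ (K.extremePoints ℝ)) = K :=
    closure_convexHull_extremePoints hKcomp hKconv
  have hy : ∃ y ∈ convexHull ℝ (K.extremePoints ℝ), dist (T x₀) y < δ / 2 := by
    have : T x₀ ∈ closure (convexHull ℝ (K.extremePoints ℝ)) := by rw [hKM]; exact hp
    exact Metric.mem_closure_iff.1 this (δ / 2) (by linarith)
  obtain ⟨y, hyhull, hyp⟩ := hy
  rw [mem_convexHull_iff_exists_fintype] at hyhull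
  obtain ⟨ι, hι, w0, z0, hw0, hw1, hz0, hyeq⟩ := hyhull
  set k := Fintype.card ι with hk
  set e := Fintype.equivFin ι
  set w : Fin k → ℝ := w0 ∘ e.symm with hw
  set z : Fin k → E := z0 ∘ e.symm with hz
  have hwnn : ∀ i, 0 ≤ w i := fun i => hw0 _
  have hwsum : (∑ i, w i) = 1 := by
    rw [hw]; simp only [Function.comp]
    rw [Equiv.sum_comp e.symm w0]; exact hw1
  have hzsum : (∑ i, w i • z i) = y := by
    rw [← hyeq, hw, hz]; simp only [Function.comp]
    exact Equiv.sum_comp e.symm (fun j => w0 j • z0 j)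
  have hslice : ∀ i : Fin k, ∃ g : E →L[ℝ] ℝ, ∃ ε : ℝ, 0 < ε ∧
      ∀ v ∈ K, sSup (g '' K) - ε < g v → dist v (z i) < δ / 4 :=
    fun i => SCDAux.extreme_small_slice hKcomp hKconv (hz0 _) (by linarith)
  choose g ε hεpos hgsl using hslice
  set h : Fin k → (X →L[𝕜] 𝕜) := fun i => StrongDual.extendRCLikeₗ ((g i).comp T) with hh
  have hre : ∀ i (x : X), RCLike.re ((h i) x) = g i (T x) := by
    intro i x
    rw [hh]
    exact StrongDual.re_extendRCLike_apply _ _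
  have hbddK : ∀ i, BddAbove (g i '' K) := fun i => (hKcomp.image (g i).continuous).bddAbove
  have hAne : (T '' A).Nonempty := ⟨T x₀, x₀, hx₀, rfl⟩
  have hsup : ∀ i, sSup ((fun a => RCLike.re ((h i) a)) '' A) = sSup (g i '' K) := by
    intro i
    have himg : (fun a => RCLike.re ((h i) a)) '' A = g i '' (T '' A) := by
      rw [Set.image_image]
      exact Set.image_congr fun a _ => hre i a
    rw [himg]
    apply le_antisymm
    · exact csSup_le_csSup (hbddK i) (hAne.image _) (Set.image_mono hTA_sub_K)
    · refine csSup_le ((hAne.mono hTA_sub_K).image _) ?_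
      rintro v ⟨kx, hkx, rfl⟩
      have hsub : BddAbove (g i '' (T '' A)) :=
        (hbddK i).mono (Set.image_mono hTA_sub_K)
      have h1 : g i kx ∈ closure (g i '' (T '' A)) := by
        rw [hK] at hkx
        exact (image_closure_subset_closure_image (g i).continuous)
          (Set.mem_image_of_mem _ hkx)
      have h2 : closure (g i '' (T '' A)) ⊆ Set.Iic (sSup (g i '' (T '' A))) :=
        closure_minimal (fun v hv => le_csSup hsub hv) isClosed_Iic
      exact h2 h1
  refine ⟨k, fun i => Slice 𝕜 A (h i) (ε i), w, fun i => ⟨h i, ε i, hεpos i, rfl⟩,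
    hwnn, hwsum, fun b hb => ?_⟩
  have hbA : ∀ i, b i ∈ A := fun i => (hb i).1
  have hcombA : (∑ i, w i • b i) ∈ A :=
    hconv.sum_mem (fun i _ => hwnn i) hwsum (fun i _ => hbA i)
  refine ⟨hcombA, fun f hf => ?_⟩
  have hclose : ∀ i, dist (T (b i)) (z i) < δ / 4 := by
    intro i
    refine hgsl i _ (hTA_sub_K ⟨b i, hbA i, rfl⟩) ?_
    have := (hb i).2
    rw [hsup i] at this
    rw [← hre i (b i)]
    exact this
  have hTnorm : ‖T (∑ i, w i • b i) - T x₀‖ < δ := by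
    have hmap : T (∑ i, w i • b i) = ∑ i, w i • T (b i) := by
      rw [map_sum]
      exact Finset.sum_congr rfl fun i _ => by rw [map_smul]
    have hsplit : T (∑ i, w i • b i) - T x₀
        = (∑ i, w i • (T (b i) - z i)) + (y - T x₀) := by
      rw [hmap, ← hzsum]
      simp only [smul_sub, Finset.sum_sub_distrib]
      abel
    have h1 : ‖∑ i, w i • (T (b i) - z i)‖ ≤ ∑ i, w i * (δ / 4) := by
      refine le_trans (norm_sum_le _ _) (Finset.sum_le_sum fun i _ => ?_)
      rw [norm_smul, Real.norm_of_nonneg (hwnn i)]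
      refine mul_le_mul_of_nonneg_left ?_ (hwnn i)
      rw [← dist_eq_norm]
      exact le_of_lt (hclose i)
    have h2 : (∑ i, w i * (δ / 4)) = δ / 4 := by rw [← Finset.sum_mul, hwsum, one_mul]
    have h3 : ‖y - T x₀‖ < δ / 2 := by rw [← dist_eq_norm, dist_comm]; exact hyp
    have h4 := norm_add_le (∑ i, w i • (T (b i) - z i)) (y - T x₀)
    rw [hsplit]
    linarith
  have h5 := norm_le_pi_norm (T (∑ i, w i • b i) - T x₀) (⟨f, hf⟩ : ↥s)
  have heval : (T (∑ i, w i • b i) - T x₀) (⟨f, hf⟩ : ↥s)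
      = f (∑ i, w i • b i) - f x₀ := rfl
  rw [heval] at h5
  exact lt_of_le_of_lt h5 hTnorm

end Auxiliary

/-- If a convex bounded subset `A` of a Banach space has a countable
π-base for the (relative) weak topology, then `A` is an SCD set. -/
theorem statement7 {𝕜 : Type*} [RCLike 𝕜] {X : Type*} [NormedAddCommGroup X]
    [NormedSpace ℝ X] [NormedSpace 𝕜 X] [IsScalarTower ℝ 𝕜 X] [CompleteSpace X]
    (A : Set X) (hconv : Convex ℝ A) (hbdd : IsBounded A)
    (hπ : HasCountableWeakPiBase 𝕜 A) :
    IsSCD 𝕜 A := by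
  classical
  obtain ⟨V, hV1, hV2⟩ := hπ
  -- for each member of the π-base, get a convex combination of slices inside it
  have hbour : ∀ n, ∃ (k : ℕ) (T : Fin k → Set X) (w : Fin k → ℝ),
      (∀ i, IsSlice 𝕜 A (T i)) ∧ (∀ i, 0 ≤ w i) ∧ (∑ i, w i) = 1 ∧
      ∀ b : Fin k → X, (∀ i, b i ∈ T i) → (∑ i, w i • b i) ∈ V n := by
    intro n
    obtain ⟨hne, U, hUo, hVeq⟩ := hV1 n
    have hne' : (A ∩ U).Nonempty := hVeq ▸ hne
    obtain ⟨x₀, hx₀A, hx₀U⟩ := hne'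
    obtain ⟨sfin, δ, hδpos, hbox⟩ := SCDAux.weakly_open_box hUo hx₀U
    obtain ⟨k, T, w, hsl, hnn, hsum, hcomb⟩ :=
      SCDAux.bourgain_box (s := sfin) hconv hbdd hδpos hx₀A
    refine ⟨k, T, w, hsl, hnn, hsum, fun b hb => ?_⟩
    rw [hVeq]
    exact ⟨(hcomb b hb).1, hbox (fun f hf => (hcomb b hb).2 f hf)⟩
  choose k T w hsl hnn hsum hcomb using hbour
  have hkpos : ∀ n, 0 < k n := by
    intro n
    rcases Nat.eq_zero_or_pos (k n) with h0 | h
    · exfalso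
      have hempty : (∑ i : Fin (k n), w n i) = 0 := by
        haveI : IsEmpty (Fin (k n)) := by rw [h0]; infer_instance
        rw [Finset.univ_eq_empty, Finset.sum_empty]
      exact one_ne_zero ((hsum n).symm.trans hempty)
    · exact h
  -- flatten the double family of slices
  set pad : ℕ → ℕ → Set X := fun n i =>
    T n (if hlt : i < k n then ⟨i, hlt⟩ else ⟨0, hkpos n⟩) with hpad
  set S : ℕ → Set X := fun m => pad (Nat.unpair m).1 (Nat.unpair m).2 with hS
  have hS_pair : ∀ (m : ℕ) (i : Fin (k m)), S (Nat.pair m i) = T m i := by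
    intro m i
    rw [hS]
    dsimp only
    rw [Nat.unpair_pair, hpad]
    dsimp only
    rw [dif_pos i.isLt]
  refine ⟨S, fun m => hsl _ _, ?_⟩
  -- the sequence is determining
  intro B hBA hBint x hx
  by_contra hxC
  set C := closure (convexHull ℝ B) with hC
  have hCconv : Convex ℝ C := (convex_convexHull ℝ B).closure
  obtain ⟨h, u, hCu, hux⟩ :=
    RCLike.geometric_hahn_banach_closed_point (𝕜 := 𝕜) hCconv isClosed_closure hxC
  -- the separating half-space cuts a nonempty slice of A, disjoint from C
  have hbddA : BddAbove ((fun a => RCLike.re (h a)) '' A) := by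
    have hb : IsBounded ((fun a => RCLike.re (h a)) '' A) := by
      have := ((RCLike.reCLM.comp (h.restrictScalars ℝ)).lipschitz.isBounded_image hbdd)
      exact this
    exact hb.bddAbove
  have hxM : RCLike.re (h x) ≤ sSup ((fun a => RCLike.re (h a)) '' A) :=
    le_csSup hbddA ⟨x, hx, rfl⟩
  have hεpos : 0 < sSup ((fun a => RCLike.re (h a)) '' A) - u := by linarith
  have hW := SCDAux.weaklyOpen_halfspace h u
  have hAW : (A ∩ {z : X | u < RCLike.re (h z)}).Nonempty := ⟨x, hx, hux⟩
  obtain ⟨m, hm⟩ := hV2 _ hW hAW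
  -- pick points of B in each slice of the m-th convex combination
  have hbm : ∀ i : Fin (k m), ∃ yb : X, yb ∈ B ∧ yb ∈ T m i := by
    intro i
    obtain ⟨yb, hyB, hyS⟩ := hBint (Nat.pair m i)
    rw [hS_pair m i] at hyS
    exact ⟨yb, hyB, hyS⟩
  choose b hbB hbT using hbm
  have hcV : (∑ i, w m i • b i) ∈ V m := hcomb m b hbT
  have hcHull : (∑ i, w m i • b i) ∈ convexHull ℝ B :=
    (convex_convexHull ℝ B).sum_mem (fun i _ => hnn m i) (hsum m)
      (fun i _ => subset_convexHull ℝ B (hbB i))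
  have h6 := hCu _ (subset_closure hcHull)
  have h5 := hm hcV
  have h7 : u < RCLike.re (h (∑ i, w m i • b i)) := h5.2
  linarith
end

section
/- Let X be a separable real or complex Banach space. If every open convex bounded subset of X is an SCD set, then X is an SCD space, i.e. every convex bounded subset of X is an SCD set. -/
open Bornology Metric Topology
open Pointwise

-- aux lemma 1: a vector almost attaining the norm in an open ball, in real part
lemma aux_exists_v {𝕜 : Type*} [RCLike 𝕜] {X : Type*} [NormedAddCommGroup X]
    [NormedSpace 𝕜 X] (f : X →L[𝕜] 𝕜) {r ε : ℝ} (hr : 0 < r) (hε : 0 < ε) :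
    ∃ v : X, ‖v‖ < r ∧ ‖f‖ * r - ε < RCLike.re (f v) := by
  by_cases hc : ‖f‖ * r < ε
  · exact ⟨0, by simpa using hr, by simpa using sub_neg.2 hc⟩
  · push_neg at hc
    have hf : 0 < ‖f‖ := by nlinarith
    have hclt : max (‖f‖ - ε / r) 0 < ‖f‖ := by
      apply max_lt _ hf
      have : 0 < ε / r := div_pos hε hr
      linarith
    obtain ⟨x, hx, hfx⟩ := f.exists_lt_apply_of_lt_opNorm hclt
    have hupos : 0 < ‖f x‖ := lt_of_le_of_lt (le_max_right _ _) hfx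
    set u := f x with hu
    refine ⟨((r : 𝕜) * ((starRingEnd 𝕜) u / (‖u‖ : 𝕜))) • x, ?_, ?_⟩
    · have : ‖((r : 𝕜) * ((starRingEnd 𝕜) u / (‖u‖ : 𝕜)))‖ = r := by
        rw [norm_mul, norm_div, RCLike.norm_conj, RCLike.norm_ofReal, RCLike.norm_ofReal,
          abs_of_pos hupos, div_self hupos.ne', mul_one, abs_of_pos hr]
      calc ‖((r : 𝕜) * ((starRingEnd 𝕜) u / (‖u‖ : 𝕜))) • x‖
          = r * ‖x‖ := by rw [norm_smul, this]
        _ < r * 1 := by exact mul_lt_mul_of_pos_left hx hr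
        _ = r := mul_one r
    · have hfv : f (((r : 𝕜) * ((starRingEnd 𝕜) u / (‖u‖ : 𝕜))) • x)
          = ((r * ‖u‖ : ℝ) : 𝕜) := by
        rw [map_smul, smul_eq_mul, ← hu]
        have : (‖u‖ : 𝕜) ≠ 0 := by
          simpa using hupos.ne'
        field_simp
        rw [mul_assoc, mul_comm ((starRingEnd 𝕜) u) u, RCLike.mul_conj]
        push_cast; ring
      rw [hfv, RCLike.ofReal_re]
      have h1 : ‖f‖ - ε / r < ‖u‖ := lt_of_le_of_lt (le_max_left _ _) hfx
      have := mul_lt_mul_of_pos_left h1 hr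
      calc ‖f‖ * r - ε = r * (‖f‖ - ε / r) := by field_simp
        _ < r * ‖u‖ := this

lemma aux_infDist {X : Type*} [NormedAddCommGroup X] {s : Set X} {a : X} {r : ℝ}
    (h : a ∈ closure (s + ball (0:X) r)) : Metric.infDist a s ≤ r := by
  rw [Metric.mem_closure_iff] at h
  refine le_of_forall_pos_le_add fun δ hδ => ?_
  obtain ⟨y, hy, hdy⟩ := h δ hδ
  rw [Set.mem_add] at hy
  obtain ⟨c, hc, w, hw, rfl⟩ := hy
  calc Metric.infDist a s ≤ dist a c := Metric.infDist_le_dist_of_mem hc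
    _ ≤ dist a (c + w) + dist (c + w) c := dist_triangle _ _ _
    _ ≤ δ + r := by
        have : dist (c + w) c = ‖w‖ := by simp [dist_eq_norm]
        rw [this]
        have hwr : ‖w‖ < r := by simpa using hw
        linarith
    _ = r + δ := by ring

lemma aux_mem_closure {X : Type*} [NormedAddCommGroup X] {s : Set X} (hs : s.Nonempty) {a : X}
    (h : ∀ k : ℕ, a ∈ closure (s + ball (0:X) (1 / (k + 1)))) : a ∈ closure s := by
  rw [Metric.mem_closure_iff_infDist_zero hs]
  refine le_antisymm ?_ Metric.infDist_nonneg
  refine le_of_forall_pos_le_add fun δ hδ => ?_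
  obtain ⟨k, hk⟩ := exists_nat_one_div_lt hδ
  have := aux_infDist (h k)
  linarith


/-- If every open convex bounded subset of a separable Banach space `X`
is an SCD set, then `X` is an SCD space: every convex bounded subset of `X` is SCD. -/
theorem statement9 {𝕜 : Type*} [RCLike 𝕜] {X : Type*} [NormedAddCommGroup X]
    [NormedSpace ℝ X] [NormedSpace 𝕜 X] [IsScalarTower ℝ 𝕜 X] [CompleteSpace X]
    [TopologicalSpace.SeparableSpace X]
    (h : ∀ A : Set X, IsOpen A → Convex ℝ A → IsBounded A → IsSCD 𝕜 A) :
    ∀ A : Set X, Convex ℝ A → IsBounded A → IsSCD 𝕜 A := by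
  intro A hA hAb
  rcases A.eq_empty_or_nonempty with rfl | hAne
  · exact ⟨fun _ => ∅, fun n => ⟨0, 1, one_pos, by ext x; simp [Slice]⟩,
      fun B hB hmeet => by simp⟩
  set U : ℕ → Set X := fun k => A + ball (0 : X) (1 / (k + 1)) with hUdef
  have hrpos : ∀ k : ℕ, (0 : ℝ) < 1 / (k + 1) := fun k => by positivity
  have hUA : ∀ k, A ⊆ U k := by
    intro k a ha
    exact ⟨a, ha, 0, by simpa using hrpos k, add_zero a⟩
  have hSCD : ∀ k, IsSCD 𝕜 (U k) :=
    fun k => h _ (isOpen_ball.add_left) (hA.add (convex_ball 0 _)) (hAb.add isBounded_ball)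
  choose S hS using hSCD
  choose f ε hε hSe using fun k => (hS k).1
  have hDet : ∀ k, Determining (U k) (S k) := fun k => (hS k).2
  obtain ⟨M, hM⟩ := isBounded_iff_forall_norm_le.1 hAb
  -- the sup over A is an upper bound issue
  have hbddA : ∀ g : X →L[𝕜] 𝕜, ∀ a ∈ A, RCLike.re (g a) ≤ ‖g‖ * M := by
    intro g a ha
    calc RCLike.re (g a) ≤ ‖g a‖ := RCLike.re_le_norm _
      _ ≤ ‖g‖ * ‖a‖ := g.le_opNorm a
      _ ≤ ‖g‖ * M := mul_le_mul_of_nonneg_left (hM a ha) (norm_nonneg g)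
  have hbddAbove : ∀ g : X →L[𝕜] 𝕜, BddAbove ((fun a => RCLike.re (g a)) '' A) := by
    intro g
    exact ⟨‖g‖ * M, by rintro - ⟨a, ha, rfl⟩; exact hbddA g a ha⟩
  have hle : ∀ k n, sSup ((fun a => RCLike.re (f k n a)) '' (U k)) ≤
      sSup ((fun a => RCLike.re (f k n a)) '' A) + ‖f k n‖ * (1 / (k + 1)) := by
    intro k n
    apply csSup_le ((hAne.mono (hUA k)).image _)
    rintro - ⟨u, hu, rfl⟩
    obtain ⟨a, ha, w, hw, rfl⟩ := hu
    have h1 : RCLike.re (f k n a) ≤ sSup ((fun a => RCLike.re (f k n a)) '' A) :=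
      le_csSup (hbddAbove _) (Set.mem_image_of_mem _ ha)
    have h2 : RCLike.re (f k n w) ≤ ‖f k n‖ * (1 / (k + 1)) := by
      calc RCLike.re (f k n w) ≤ ‖f k n w‖ := RCLike.re_le_norm _
        _ ≤ ‖f k n‖ * ‖w‖ := (f k n).le_opNorm w
        _ ≤ ‖f k n‖ * (1 / (k + 1)) := by
            have : ‖w‖ < 1 / (k + 1) := by simpa using hw
            exact mul_le_mul_of_nonneg_left this.le (norm_nonneg _)
    have : RCLike.re (f k n (a + w)) = RCLike.re (f k n a) + RCLike.re (f k n w) := by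
      rw [map_add, map_add]
    simp only [this]
    linarith
  -- enumeration of ℕ × ℕ
  set d : ℕ → ℕ × ℕ := fun m => (Denumerable.eqv (ℕ × ℕ)).symm m with hd
  have hdsurj : ∀ k n : ℕ, ∃ m, d m = (k, n) :=
    fun k n => ⟨Denumerable.eqv (ℕ × ℕ) (k, n), Equiv.symm_apply_apply _ _⟩
  refine ⟨fun m => Slice 𝕜 A (f (d m).1 (d m).2) (ε (d m).1 (d m).2 / 2),
    fun m => ⟨_, _, half_pos (hε _ _), rfl⟩, ?_⟩
  intro B hBA hmeet
  have hBne : B.Nonempty := ((hmeet 0).mono Set.inter_subset_left)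
  -- key: for each k, U k is in closure of convexHull B + ball
  have key : ∀ k, U k ⊆ closure (convexHull ℝ B + ball (0 : X) (1 / (k + 1))) := by
    intro k
    have hmeets : ∀ n, ((B + ball (0 : X) (1 / (k + 1))) ∩ S k n).Nonempty := by
      intro n
      obtain ⟨m, hm⟩ := hdsurj k n
      obtain ⟨b, hbB, hbS⟩ := hmeet m
      simp only [hm] at hbS
      simp only [Slice, Set.mem_setOf_eq] at hbS
      obtain ⟨hbA, hbgt⟩ := hbS
      obtain ⟨v, hvn, hvgt⟩ := aux_exists_v (f k n) (hrpos k) (half_pos (hε k n))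
      refine ⟨b + v, ⟨b, hbB, v, by simpa using hvn, rfl⟩, ?_⟩
      rw [hSe k n]
      refine ⟨⟨b, hbA, v, by simpa using hvn, rfl⟩, ?_⟩
      have hre : RCLike.re (f k n (b + v)) = RCLike.re (f k n b) + RCLike.re (f k n v) := by
        rw [map_add, map_add]
      rw [hre]
      have := hle k n
      linarith
    have hsub : B + ball (0 : X) (1 / (k + 1)) ⊆ U k := Set.add_subset_add_right hBA
    have := hDet k _ hsub hmeets
    rwa [convexHull_add, (convex_ball (0 : X) _).convexHull_eq] at this
  intro a ha
  exact aux_mem_closure (hBne.mono (subset_convexHull ℝ B))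
    (fun k => key k (hUA k ha))
end
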